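/- arXiv:2408.11153 — 8 statements merged into one kernel-verified Lean document; each statement's English description precedes it below -/
import Mathlib

section
/- Let $T$ be a bounded operator on a Banach space $X$ with $\|T\|\le C$ for some $C$, and let $B_T$ be the operator on $\ell^p(X,\mathbb{N})$ (the $\ell^p$-sum of countably many copies of $X$) defined by $B_T(x_1,x_2,x_3,\dots) = (Tx_2, Tx_3, \dots)$. If $T$ is topologically transitive on $X$, then for any $N\ge 1$ and any family $(U_j)_{1\le j\le N}$ of non-empty open sets in $X$, the intersection $N_T(B_X(0,1),U_1)\cap\cdots\cap N_T(B_X(0,1),U_N)$ is non-empty, where $N_T(A,B) = \{n\ge 0 : T^n A \cap B \ne \emptyset\}$ and $B_X(0,1)$ is the open unit ball of $X$. -/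
open Filter Topology ENNReal

section Defs
variable {Y : Type*} [TopologicalSpace Y]

/-- A map is hypercyclic if some point has dense orbit. -/
def Hypercyclic (f : Y → Y) : Prop := ∃ y : Y, Dense (Set.range fun n : ℕ => f^[n] y)

/-- Topological transitivity. -/
def TopologicallyTransitive (f : Y → Y) : Prop :=
  ∀ U V : Set Y, IsOpen U → IsOpen V → U.Nonempty → V.Nonempty →
    ∃ n : ℕ, (f^[n] '' U ∩ V).Nonempty

/-- Topological mixing: return sets of pairs of non-empty open sets are cofinite. -/
def TopologicallyMixing (f : Y → Y) : Prop :=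
  ∀ U V : Set Y, IsOpen U → IsOpen V → U.Nonempty → V.Nonempty →
    ∃ N : ℕ, ∀ n ≥ N, (f^[n] '' U ∩ V).Nonempty

/-- Weak mixing: `f ⊕ f` is hypercyclic. -/
def WeaklyMixing (f : Y → Y) : Prop := Hypercyclic (fun q : Y × Y => (f q.1, f q.2))

/-- Chaos in the sense of Devaney: hypercyclic with a dense set of periodic points. -/
def Chaotic (f : Y → Y) : Prop :=
  Hypercyclic f ∧ Dense {y : Y | ∃ d : ℕ, 1 ≤ d ∧ f^[d] y = y}

/-- Lower density of a set of natural numbers. -/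
noncomputable def lowerDensity (A : Set ℕ) : ℝ :=
  Filter.liminf
    (fun N : ℕ => (∑ n ∈ Finset.range N, Set.indicator A (fun _ => (1 : ℝ)) n) / N)
    Filter.atTop

/-- Frequent hypercyclicity: some orbit visits every non-empty open set along a set of
positive lower density. -/
def FrequentlyHypercyclic (f : Y → Y) : Prop :=
  ∃ y : Y, ∀ U : Set Y, IsOpen U → U.Nonempty → 0 < lowerDensity {n : ℕ | f^[n] y ∈ U}

end Defs

/-- The `c₀`-sum of a family of normed spaces, realised as a submodule of `lp E ∞`:
those bounded families whose norms tend to `0` along the cofinite filter. -/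
noncomputable def c0Sum {ι : Type*} (E : ι → Type*) [∀ i, NormedAddCommGroup (E i)]
    [∀ i, NormedSpace ℝ (E i)] : Submodule ℝ (lp E ∞) where
  carrier := {x | Tendsto (fun i => ‖(x : ∀ i, E i) i‖) cofinite (nhds 0)}
  add_mem' := by
    intro a b ha hb
    refine squeeze_zero (fun i => norm_nonneg _) (fun i => ?_) (by simpa using ha.add hb)
    simp only [lp.coeFn_add, Pi.add_apply]
    exact norm_add_le _ _
  zero_mem' := by
    simp only [Set.mem_setOf_eq, lp.coeFn_zero, Pi.zero_apply, norm_zero]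
    exact tendsto_const_nhds
  smul_mem' := by
    intro c a ha
    have h : Tendsto (fun i => ‖c‖ * ‖(a : ∀ i, E i) i‖) cofinite (nhds 0) := by
      simpa using ha.const_mul ‖c‖
    refine squeeze_zero (fun i => norm_nonneg _) (fun i => ?_) h
    simp only [lp.coeFn_smul, Pi.smul_apply]
    exact (norm_smul c _).le

/-- The identity, as a continuous linear map between equal members of a family of spaces. -/
def castL (E : ℤ → Type*) [∀ k, NormedAddCommGroup (E k)] [∀ k, NormedSpace ℝ (E k)]
    {j k : ℤ} (h : j = k) : E j →L[ℝ] E k := by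
  subst h; exact ContinuousLinearMap.id ℝ (E j)

/-- The composite `T_{j,j+n} = T_{j+1} ∘ ⋯ ∘ T_{j+n} : E (j+n) → E j` (here `T k` denotes
the operator `E (k+1) → E k`). -/
noncomputable def iterComp {E : ℤ → Type*} [∀ k, NormedAddCommGroup (E k)]
    [∀ k, NormedSpace ℝ (E k)] (T : ∀ k : ℤ, E (k + 1) →L[ℝ] E k) :
    ∀ (j : ℤ) (n : ℕ), E (j + n) →L[ℝ] E j
  | j, 0 => castL E (by simp)
  | j, (n + 1) => (iterComp T j n).comp ((T (j + n)).comp (castL E (by push_cast; ring)))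

/-- Auxiliary: staggered visiting times. If `T` is topologically transitive, for any finite
family of nonempty open sets there are a nonempty open set `W` and times `c j` such that
every point of `W` visits `U j` at time `c j`. -/
lemma exists_staggered_times {X : Type*} [NormedAddCommGroup X] [NormedSpace ℝ X]
    (T : X →L[ℝ] X) (hT : TopologicallyTransitive (⇑T)) :
    ∀ (N : ℕ) (U : Fin N → Set X), (∀ j, IsOpen (U j)) → (∀ j, (U j).Nonempty) →
      ∃ (c : Fin N → ℕ) (W : Set X), IsOpen W ∧ W.Nonempty ∧
        ∀ z ∈ W, ∀ j, (⇑T)^[c j] z ∈ U j := by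
  intro N
  induction N with
  | zero =>
    intro U _ _
    exact ⟨fun j => 0, Set.univ, isOpen_univ, ⟨0, trivial⟩, fun z _ j => j.elim0⟩
  | succ n ih =>
    intro U hUo hUne
    obtain ⟨c', W', hW'o, hW'ne, hW'⟩ :=
      ih (fun j => U j.succ) (fun j => hUo _) (fun j => hUne _)
    obtain ⟨g, hg⟩ := hT (U 0) W' (hUo 0) hW'o (hUne 0) hW'ne
    obtain ⟨y, ⟨x, hxU, hxy⟩, hyW⟩ := hg
    have hcont : Continuous ((⇑T)^[g]) := T.continuous.iterate g
    refine ⟨Fin.cases 0 (fun i => c' i + g), U 0 ∩ (⇑T)^[g] ⁻¹' W',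
      (hUo 0).inter (hW'o.preimage hcont), ⟨x, hxU, by simpa [hxy] using hyW⟩, ?_⟩
    intro z hz j
    refine Fin.cases ?_ (fun i => ?_) j
    · simpa using hz.1
    · have h1 : (⇑T)^[g] z ∈ W' := hz.2
      have h2 := hW' _ h1 i
      simpa [Function.iterate_add_apply] using h2

/-- if `T` (a bounded operator, `‖T‖ ≤ C`) is topologically transitive, then
for any finite family of non-empty open sets `U_1,…,U_N` in `X` there is one `n` with
`T^n(B_X(0,1)) ∩ U_j ≠ ∅` for all `j`, i.e. `⋂_j N_T(B_X(0,1),U_j) ≠ ∅`. -/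
theorem stmt_1 {X : Type*} [NormedAddCommGroup X] [NormedSpace ℝ X] [CompleteSpace X]
    (T : X →L[ℝ] X) (C : ℝ) (hC : ‖T‖ ≤ C)
    (hT : TopologicallyTransitive (⇑T)) :
    ∀ N : ℕ, 1 ≤ N → ∀ U : Fin N → Set X, (∀ j, IsOpen (U j)) → (∀ j, (U j).Nonempty) →
      ∃ n : ℕ, ∀ j, ((⇑T)^[n] '' Metric.ball (0 : X) 1 ∩ U j).Nonempty := by
  intro N _ U hUo hUne
  obtain ⟨c, W, hWo, hWne, hW⟩ := exists_staggered_times T hT N U hUo hUne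
  set D : ℝ := max C 1 with hD
  have hD1 : (1 : ℝ) ≤ D := le_max_right _ _
  have hD0 : (0 : ℝ) < D := lt_of_lt_of_le one_pos hD1
  have hCD : ‖T‖ ≤ D := hC.trans (le_max_left _ _)
  set M : ℕ := Finset.univ.sup c with hM
  have hcM : ∀ j, c j ≤ M := fun j => Finset.le_sup (Finset.mem_univ j)
  have hDM : (0 : ℝ) < D ^ M := pow_pos hD0 M
  have hball : (Metric.ball (0 : X) ((D ^ M)⁻¹)).Nonempty :=
    Metric.nonempty_ball.2 (inv_pos.2 hDM)
  obtain ⟨k, hk⟩ := hT (Metric.ball 0 ((D ^ M)⁻¹)) W Metric.isOpen_ball hWo hball hWne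
  obtain ⟨y, ⟨w, hwball, hwy⟩, hyW⟩ := hk
  have hwnorm : ‖w‖ < (D ^ M)⁻¹ := by simpa [Metric.mem_ball] using hwball
  have hiter : ∀ (m : ℕ) (v : X), ‖(⇑T)^[m] v‖ ≤ D ^ m * ‖v‖ := by
    intro m
    induction m with
    | zero => intro v; simp
    | succ i ihm =>
      intro v
      rw [Function.iterate_succ_apply']
      calc ‖T ((⇑T)^[i] v)‖ ≤ ‖T‖ * ‖(⇑T)^[i] v‖ := T.le_opNorm _
        _ ≤ D * (D ^ i * ‖v‖) :=
          mul_le_mul hCD (ihm v) (norm_nonneg _) (le_of_lt hD0)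
        _ = D ^ (i + 1) * ‖v‖ := by ring
  refine ⟨k, fun j => ?_⟩
  refine ⟨(⇑T)^[k] ((⇑T)^[c j] w), ⟨(⇑T)^[c j] w, ?_, rfl⟩, ?_⟩
  · rw [Metric.mem_ball, dist_zero_right]
    calc ‖(⇑T)^[c j] w‖ ≤ D ^ (c j) * ‖w‖ := hiter _ _
      _ < D ^ (c j) * (D ^ M)⁻¹ :=
        mul_lt_mul_of_pos_left hwnorm (pow_pos hD0 _)
      _ ≤ D ^ M * (D ^ M)⁻¹ :=
        mul_le_mul_of_nonneg_right (pow_le_pow_right₀ hD1 (hcM j)) (le_of_lt (inv_pos.2 hDM))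
      _ = 1 := mul_inv_cancel₀ (ne_of_gt hDM)
  · have hcomm : (⇑T)^[k] ((⇑T)^[c j] w) = (⇑T)^[c j] ((⇑T)^[k] w) := by
      rw [← Function.iterate_add_apply, ← Function.iterate_add_apply, Nat.add_comm]
    rw [hcomm, hwy]
    exact hW y hyW j
end

section
/- Let $T$ be a bounded operator on a separable Banach space $X$ and $B_T$ the shift operator on $Y=\ell^p(X,\mathbb{N})$ (or $c_0(X,\mathbb{N})$) given by $B_T(x_1,x_2,\dots)=(Tx_2,Tx_3,\dots)$. The operator $B_T$ is hypercyclic on $Y$ if and only if for every $N\ge 1$ and every family $(U_j)_{1\le j\le N}$ of non-empty open subsets of $X$, there exists $n\ge 1$ such that $T^n(B_X(0,1))\cap U_j\ne\emptyset$ for all $1\le j\le N$. -/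
open Filter Topology ENNReal

/-!
A dense orbit of `B_T` visits the unit ball and, at least one step later, the open set
`{z | z_j ∈ U_j for all j}`; hence some `y` in the unit ball and some `n ≥ 1` satisfy
`(B_T^n y)_j = T^n y_{j+n} ∈ U_j`, with `‖y_{j+n}‖ ≤ ‖y‖ < 1`.

Conversely, the condition improves itself: one more target set far from the origin forces `n` to
be large, and rescaling makes the preimages small. Given `u` and `v` supported on the first `N`
coordinates, pick `n ≥ N` and small `x_j` with `T^n x_j ≈ v_j`; adding the `x_j` to `u` at the
coordinates `j + n` gives a vector close to `u` that `B_T^n` maps close to `v`. So `B_T` is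
topologically transitive, hence hypercyclic by Birkhoff's transitivity theorem, a Baire category
argument in the separable Banach space `Y`.
-/

section Dynamics
variable {Y : Type*} [TopologicalSpace Y] {f : Y → Y}

theorem Hypercyclic.exists_iterate_image_inter_nonempty [T1Space Y] [∀ y : Y, (𝓝[≠] y).NeBot]
    (hf : Hypercyclic f) {U V : Set Y} (hU : IsOpen U) (hV : IsOpen V) (hUne : U.Nonempty)
    (hVne : V.Nonempty) (m : ℕ) : ∃ n, m ≤ n ∧ (f^[n] '' U ∩ V).Nonempty := by
  obtain ⟨y, hy⟩ := hf
  obtain ⟨_, ha, a, rfl⟩ := hy.inter_open_nonempty U hU hUne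
  have hfin : ((fun k => f^[k] y) '' Set.Iio (a + m)).Finite := (Set.finite_Iio _).image _
  obtain ⟨_, hbV, ⟨b, rfl⟩, hb⟩ := (hy.sdiff_finite hfin).inter_open_nonempty V hV hVne
  have hab : a + m ≤ b := not_lt.1 fun h => hb ⟨b, h, rfl⟩
  refine ⟨b - a, by omega, f^[b] y, ⟨f^[a] y, ha, ?_⟩, hbV⟩
  rw [← Function.iterate_add_apply, Nat.sub_add_cancel (by omega)]

theorem TopologicallyTransitive.hypercyclic [BaireSpace Y] [SecondCountableTopology Y]
    [Nonempty Y] (hf : TopologicallyTransitive f) (hcont : Continuous f) : Hypercyclic f := by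
  have hb := TopologicalSpace.isBasis_countableBasis Y
  have hopen : ∀ V ∈ TopologicalSpace.countableBasis Y, IsOpen (⋃ n, f^[n] ⁻¹' V) :=
    fun V hV => isOpen_iUnion fun n => (hb.isOpen hV).preimage (hcont.iterate n)
  have hdense : ∀ V ∈ TopologicalSpace.countableBasis Y, Dense (⋃ n, f^[n] ⁻¹' V) := by
    intro V hV
    refine dense_iff_inter_open.2 fun U hU hUne => ?_
    have hVne : V.Nonempty := Set.nonempty_iff_ne_empty.2 fun h =>
      TopologicalSpace.empty_notMem_countableBasis Y (h ▸ hV)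
    obtain ⟨n, _, ⟨x, hxU, rfl⟩, hxV⟩ := hf U V hU (hb.isOpen hV) hUne hVne
    exact ⟨x, hxU, Set.mem_iUnion.2 ⟨n, hxV⟩⟩
  obtain ⟨y, hy⟩ := (dense_biInter_of_isOpen hopen
    (TopologicalSpace.countable_countableBasis Y) hdense).nonempty
  refine ⟨y, hb.dense_iff.2 fun V hV _ => ?_⟩
  obtain ⟨n, hn⟩ := Set.mem_iUnion.1 (Set.mem_iInter₂.1 hy V hV)
  exact ⟨_, hn, n, rfl⟩

end Dynamics

section UnitBall
variable {X : Type*} [NormedAddCommGroup X]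

def UnitBallIteratesHit (T : X → X) : Prop :=
  ∀ N : ℕ, 1 ≤ N → ∀ U : Fin N → Set X, (∀ j, IsOpen (U j)) → (∀ j, (U j).Nonempty) →
    ∃ n : ℕ, 1 ≤ n ∧ ∀ j, (T^[n] '' Metric.ball (0 : X) 1 ∩ U j).Nonempty

variable [NormedSpace ℝ X]

theorem ContinuousLinearMap.norm_iterate_apply_le (T : X →L[ℝ] X) (n : ℕ) (x : X) :
    ‖(⇑T)^[n] x‖ ≤ ‖T‖ ^ n * ‖x‖ := by
  simpa using (T.lipschitz.iterate n).norm_le_mul (iterate_map_zero T n) x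

theorem UnitBallIteratesHit.exists_ge {T : X →L[ℝ] X} (hT : UnitBallIteratesHit ⇑T) (m : ℕ)
    {δ : ℝ} (hδ : 0 < δ) {N : ℕ} (U : Fin N → Set X) (hU : ∀ j, IsOpen (U j))
    (hUne : ∀ j, (U j).Nonempty) : ∃ n, m ≤ n ∧ ∀ j, ∃ a, ‖a‖ < δ ∧ (⇑T)^[n] a ∈ U j := by
  rcases subsingleton_or_nontrivial X with hX | hX
  · refine ⟨m, le_rfl, fun j => ⟨0, by simpa using hδ, ?_⟩⟩
    obtain ⟨u, hu⟩ := hUne j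
    rwa [Subsingleton.elim ((⇑T)^[m] 0) u]
  -- For `n < m`, `T^[n]` maps the unit ball into the closed ball of radius `R`, so the extra
  -- target `{x | R < ‖x‖}` can only be hit at times `n ≥ m`.
  set R := (1 + ‖T‖) ^ m
  let V : Fin (N + 1) → Set X := Fin.cons {x | R < ‖x‖} fun j => (δ • ·) ⁻¹' U j
  have hV : ∀ j, IsOpen (V j) := Fin.forall_fin_succ.2
    ⟨isOpen_lt continuous_const continuous_norm,
      fun j => (hU j).preimage (continuous_const_smul δ)⟩
  have hVne : ∀ j, (V j).Nonempty := by
    refine Fin.forall_fin_succ.2 ⟨NormedSpace.exists_lt_norm ℝ X R, fun j => ?_⟩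
    obtain ⟨u, hu⟩ := hUne j
    exact ⟨δ⁻¹ • u, by simpa [V, smul_smul, hδ.ne'] using hu⟩
  obtain ⟨n, -, hn⟩ := hT (N + 1) (by omega) V hV hVne
  refine ⟨n, ?_, fun j => ?_⟩
  · obtain ⟨_, ⟨b, hb, rfl⟩, hbR⟩ := hn 0
    replace hbR : R < ‖(⇑T)^[n] b‖ := hbR
    by_contra! hnm
    refine hbR.not_ge ?_
    calc ‖(⇑T)^[n] b‖ ≤ ‖T‖ ^ n * ‖b‖ := T.norm_iterate_apply_le n b
      _ ≤ (1 + ‖T‖) ^ n * 1 := by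
        gcongr
        · linarith
        · exact (mem_ball_zero_iff.1 hb).le
      _ ≤ R := by
        rw [mul_one]
        exact pow_le_pow_right₀ (by linarith [norm_nonneg T]) hnm.le
  · obtain ⟨_, ⟨b, hb, rfl⟩, hbU⟩ := hn j.succ
    refine ⟨δ • b, ?_, ?_⟩
    · rw [norm_smul, Real.norm_of_nonneg hδ.le]
      exact mul_lt_of_lt_one_right hδ (mem_ball_zero_iff.1 hb)
    · rw [← FunLike.coe_pow_eq_iterate, map_smul, FunLike.coe_pow_eq_iterate]
      exact hbU

end UnitBall

structure SequenceCoordinates (X Y : Type*) [NormedAddCommGroup X] [NormedSpace ℝ X]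
    [NormedAddCommGroup Y] [NormedSpace ℝ Y] where
  coord : ℕ → Y →L[ℝ] X
  single : ℕ → X →L[ℝ] Y
  norm_coord_le : ∀ k y, ‖coord k y‖ ≤ ‖y‖
  norm_single_le : ∀ k x, ‖single k x‖ ≤ ‖x‖
  coord_single_self : ∀ k x, coord k (single k x) = x
  coord_single_of_ne : ∀ {j k}, j ≠ k → ∀ x, coord k (single j x) = 0
  tendsto_sum_single :
    ∀ y, Tendsto (fun N => ∑ k ∈ Finset.range N, single k (coord k y)) atTop (𝓝 y)

namespace SequenceCoordinates
variable {X Y : Type*} [NormedAddCommGroup X] [NormedSpace ℝ X]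
  [NormedAddCommGroup Y] [NormedSpace ℝ Y] (S : SequenceCoordinates X Y)
  {T : X →L[ℝ] X} {B : Y →L[ℝ] Y}

theorem ext {y y' : Y} (h : ∀ k, S.coord k y = S.coord k y') : y = y' :=
  tendsto_nhds_unique (S.tendsto_sum_single y) (by simpa only [h] using S.tendsto_sum_single y')

protected theorem nontrivial (S : SequenceCoordinates X Y) [Nontrivial X] : Nontrivial Y := by
  obtain ⟨x, hx⟩ := exists_ne (0 : X)
  refine ⟨S.single 0 x, 0, fun h => hx ?_⟩
  simpa [S.coord_single_self] using congrArg (S.coord 0) h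

protected theorem separableSpace (S : SequenceCoordinates X Y)
    [TopologicalSpace.SeparableSpace X] : TopologicalSpace.SeparableSpace Y := by
  have hsep : TopologicalSpace.IsSeparable
      (⋃ N, Set.range fun x : ℕ → X => ∑ k ∈ Finset.range N, S.single k (x k)) :=
    .iUnion fun N => TopologicalSpace.isSeparable_range <|
      continuous_finsetSum _ fun k _ => (S.single k).continuous.comp (continuous_apply k)
  refine TopologicalSpace.isSeparable_univ_iff.1 (hsep.closure.mono fun y _ => ?_)
  exact mem_closure_of_tendsto (S.tendsto_sum_single y)
    (Eventually.of_forall fun N => Set.mem_iUnion.2 ⟨N, _, rfl⟩)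

theorem norm_sum_single_le_mul {N : ℕ} (idx : Fin N → ℕ) (x : Fin N → X) {δ : ℝ}
    (hx : ∀ j, ‖x j‖ < δ) : ‖∑ j, S.single (idx j) (x j)‖ ≤ N * δ :=
  (norm_sum_le _ _).trans <|
    (Finset.sum_le_sum fun j _ => (S.norm_single_le _ _).trans (hx j).le).trans (by simp)

def IsBackwardShift (T : X →L[ℝ] X) (B : Y →L[ℝ] Y) : Prop :=
  ∀ y k, S.coord k (B y) = T (S.coord (k + 1) y)

section Shift
variable {S}

theorem coord_iterate (hB : S.IsBackwardShift T B) (n k : ℕ) (y : Y) :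
    S.coord k ((⇑B)^[n] y) = (⇑T)^[n] (S.coord (k + n) y) := by
  induction n generalizing k with
  | zero => rfl
  | succ n ih =>
    rw [Function.iterate_succ_apply', hB, ih, ← Function.iterate_succ_apply' (⇑T),
      Nat.add_right_comm]
    rfl

theorem iterate_single_add (hB : S.IsBackwardShift T B) (n j : ℕ) (x : X) :
    (⇑B)^[n] (S.single (j + n) x) = S.single j ((⇑T)^[n] x) := by
  refine S.ext fun k => ?_
  rw [S.coord_iterate hB]
  rcases eq_or_ne j k with rfl | hjk
  · rw [S.coord_single_self, S.coord_single_self]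
  · rw [S.coord_single_of_ne (by omega), S.coord_single_of_ne hjk, iterate_map_zero]

theorem iterate_single_of_lt (hB : S.IsBackwardShift T B) {j n : ℕ} (h : j < n) (x : X) :
    (⇑B)^[n] (S.single j x) = 0 :=
  S.ext fun k => by
    rw [S.coord_iterate hB, S.coord_single_of_ne (by omega), iterate_map_zero, map_zero]

theorem iterate_sum_single_add_sum_single (hB : S.IsBackwardShift T B) {N n : ℕ} (h : N ≤ n)
    (a : ℕ → X) (x : Fin N → X) :
    (⇑B)^[n] (∑ k ∈ Finset.range N, S.single k (a k) + ∑ j : Fin N, S.single (j + n) (x j)) =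
      ∑ j : Fin N, S.single j ((⇑T)^[n] (x j)) := by
  rw [← FunLike.coe_pow_eq_iterate, map_add, map_sum, map_sum, Finset.sum_eq_zero, zero_add]
  · simp only [FunLike.coe_pow_eq_iterate, S.iterate_single_add hB]
  · intro k hk
    rw [FunLike.coe_pow_eq_iterate,
      S.iterate_single_of_lt hB ((Finset.mem_range.1 hk).trans_le h)]

theorem unitBallIteratesHit_of_hypercyclic (hB : S.IsBackwardShift T B)
    (h : Hypercyclic ⇑B) : UnitBallIteratesHit ⇑T := by
  intro N _ U hU hUne
  rcases subsingleton_or_nontrivial X with hX | hX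
  · refine ⟨1, le_rfl, fun j => ?_⟩
    obtain ⟨u, hu⟩ := hUne j
    exact ⟨u, ⟨0, Metric.mem_ball_self one_pos, Subsingleton.elim _ _⟩, hu⟩
  have := S.nontrivial
  choose u hu using hUne
  set V := ⋂ j : Fin N, S.coord j ⁻¹' U j
  have hV : IsOpen V := isOpen_iInter_of_finite fun j => (hU j).preimage (S.coord j).continuous
  have hVne : V.Nonempty := by
    refine ⟨∑ i : Fin N, S.single i (u i), Set.mem_iInter.2 fun j => ?_⟩
    rw [Set.mem_preimage, map_sum, Finset.sum_eq_single j, S.coord_single_self]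
    · exact hu j
    · exact fun i _ hij => S.coord_single_of_ne (Fin.val_injective.ne hij) _
    · simp
  obtain ⟨n, hn, _, ⟨y, hy, rfl⟩, hyV⟩ := h.exists_iterate_image_inter_nonempty
    Metric.isOpen_ball hV ⟨0, Metric.mem_ball_self one_pos⟩ hVne 1
  refine ⟨n, hn, fun j => ⟨_, ⟨S.coord (j + n) y, ?_, rfl⟩, ?_⟩⟩
  · exact mem_ball_zero_iff.2 ((S.norm_coord_le _ _).trans_lt (mem_ball_zero_iff.1 hy))
  · rw [← S.coord_iterate hB]
    exact Set.mem_iInter.1 hyV j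

theorem topologicallyTransitive (hB : S.IsBackwardShift T B) (hT : UnitBallIteratesHit ⇑T) :
    TopologicallyTransitive ⇑B := by
  intro U V hU hV ⟨u, hu⟩ ⟨v, hv⟩
  obtain ⟨ε, hε, huU, hvV⟩ : ∃ ε > 0, Metric.ball u ε ⊆ U ∧ Metric.ball v ε ⊆ V := by
    obtain ⟨εu, hεu, huU⟩ := Metric.isOpen_iff.1 hU u hu
    obtain ⟨εv, hεv, hvV⟩ := Metric.isOpen_iff.1 hV v hv
    exact ⟨min εu εv, lt_min hεu hεv, (Metric.ball_subset_ball (min_le_left _ _)).trans huU,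
      (Metric.ball_subset_ball (min_le_right _ _)).trans hvV⟩
  obtain ⟨N, hNu, hNv⟩ : ∃ N, dist (∑ k ∈ Finset.range N, S.single k (S.coord k u)) u < ε / 2 ∧
      dist (∑ k ∈ Finset.range N, S.single k (S.coord k v)) v < ε / 2 :=
    ((Metric.tendsto_nhds.1 (S.tendsto_sum_single u) _ (half_pos hε)).and
      (Metric.tendsto_nhds.1 (S.tendsto_sum_single v) _ (half_pos hε))).exists
  set δ := ε / (2 * (N + 1))
  have hδ : 0 < δ := by positivity
  have hNδ : N * δ ≤ ε / 2 := by
    rw [mul_div_assoc', div_le_div_iff₀ (by positivity) two_pos]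
    nlinarith
  obtain ⟨n, hNn, hx⟩ := hT.exists_ge N hδ (fun j : Fin N => Metric.ball (S.coord j v) δ)
    (fun _ => Metric.isOpen_ball) fun _ => ⟨_, Metric.mem_ball_self hδ⟩
  choose x hx hTx using hx
  set z := ∑ k ∈ Finset.range N, S.single k (S.coord k u) + ∑ j : Fin N, S.single (j + n) (x j)
    with hz
  refine ⟨n, _, ⟨z, huU (Metric.mem_ball.2 ?_), rfl⟩, hvV (Metric.mem_ball.2 ?_)⟩
  · refine (dist_triangle _ (∑ k ∈ Finset.range N, S.single k (S.coord k u)) _).trans_lt ?_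
    rw [hz, dist_self_add_left]
    linarith [(S.norm_sum_single_le_mul (· + n) _ hx).trans hNδ]
  · rw [S.iterate_sum_single_add_sum_single hB hNn]
    refine (dist_triangle _ (∑ k ∈ Finset.range N, S.single k (S.coord k v)) _).trans_lt ?_
    rw [Finset.sum_range fun k => S.single k (S.coord k v)] at hNv ⊢
    rw [dist_eq_norm, ← Finset.sum_sub_distrib]
    simp only [← map_sub]
    have hTx' : ∀ j, ‖(⇑T)^[n] (x j) - S.coord j v‖ < δ := fun j => by
      simpa only [Metric.mem_ball, dist_eq_norm] using hTx j
    linarith [(S.norm_sum_single_le_mul (↑) _ hTx').trans hNδ]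

theorem hypercyclic_iff (hB : S.IsBackwardShift T B) [CompleteSpace Y]
    [TopologicalSpace.SeparableSpace X] : Hypercyclic ⇑B ↔ UnitBallIteratesHit ⇑T := by
  refine ⟨S.unitBallIteratesHit_of_hypercyclic hB, fun hT => ?_⟩
  have := S.separableSpace
  exact (S.topologicallyTransitive hB hT).hypercyclic B.continuous

end Shift

end SequenceCoordinates

section Instances
variable {X : Type*} [NormedAddCommGroup X] [NormedSpace ℝ X]

noncomputable def lp.sequenceCoordinates (p : ℝ≥0∞) [Fact (1 ≤ p)] (hp : p ≠ ∞) :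
    SequenceCoordinates X (lp (fun _ : ℕ => X) p) where
  coord := lp.evalCLM ℝ (fun _ : ℕ => X) p
  single := lp.singleContinuousLinearMap ℝ (fun _ : ℕ => X) p
  norm_coord_le k y :=
    lp.norm_apply_le_norm (E := fun _ : ℕ => X) (zero_lt_one.trans_le Fact.out).ne' y k
  norm_single_le k x :=
    (lp.norm_single (E := fun _ : ℕ => X) (zero_lt_one.trans_le Fact.out) k x).le
  coord_single_self := lp.single_apply_self (E := fun _ : ℕ => X) p
  coord_single_of_ne h x := lp.single_apply_ne (E := fun _ : ℕ => X) p _ x h.symm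
  tendsto_sum_single y := (lp.hasSum_single hp y).tendsto_sum_nat

theorem mem_c0Sum {ι : Type*} {E : ι → Type*} [∀ i, NormedAddCommGroup (E i)]
    [∀ i, NormedSpace ℝ (E i)] {x : lp E ∞} :
    x ∈ c0Sum E ↔ Tendsto (fun i => ‖x i‖) cofinite (𝓝 0) :=
  Iff.rfl

theorem isClosed_c0Sum {ι : Type*} (E : ι → Type*) [∀ i, NormedAddCommGroup (E i)]
    [∀ i, NormedSpace ℝ (E i)] : IsClosed (c0Sum E : Set (lp E ∞)) := by
  refine isClosed_of_closure_subset fun x hx => mem_c0Sum.2 ?_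
  refine Metric.tendsto_nhds.2 fun ε hε => ?_
  obtain ⟨y, hy, hxy⟩ := Metric.mem_closure_iff.1 hx (ε / 2) (half_pos hε)
  filter_upwards [Metric.tendsto_nhds.1 (mem_c0Sum.1 hy) _ (half_pos hε)] with i hi
  rw [Real.dist_0_eq_abs, abs_norm] at hi ⊢
  calc ‖x i‖ ≤ ‖x i - y i‖ + ‖y i‖ := norm_le_norm_sub_add _ _
    _ ≤ ‖x - y‖ + ‖y i‖ := by
        gcongr
        exact lp.norm_apply_le_norm ENNReal.top_ne_zero (x - y) i
    _ < ε / 2 + ε / 2 := add_lt_add (by rwa [← dist_eq_norm]) hi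
    _ = ε := add_halves ε

instance {ι : Type*} (E : ι → Type*) [∀ i, NormedAddCommGroup (E i)] [∀ i, NormedSpace ℝ (E i)]
    [∀ i, CompleteSpace (E i)] : CompleteSpace (c0Sum E) :=
  (isClosed_c0Sum E).completeSpace_coe

theorem lp.single_mem_c0Sum {ι : Type*} [DecidableEq ι] {E : ι → Type*}
    [∀ i, NormedAddCommGroup (E i)] [∀ i, NormedSpace ℝ (E i)] (i : ι) (x : E i) :
    lp.single ∞ i x ∈ c0Sum E := by
  refine (mem_c0Sum (E := E)).2 (tendsto_const_nhds.congr' ?_)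
  filter_upwards [eventually_cofinite_ne i] with j hj
  simp [Pi.single_eq_of_ne hj]

theorem lp.tendsto_sum_single_of_mem_c0Sum {E : ℕ → Type*} [∀ i, NormedAddCommGroup (E i)]
    [∀ i, NormedSpace ℝ (E i)] {y : lp E ∞} (hy : y ∈ c0Sum E) :
    Tendsto (fun N => ∑ k ∈ Finset.range N, lp.single ∞ k (y k)) atTop (𝓝 y) := by
  rw [mem_c0Sum, Nat.cofinite_eq_atTop, Metric.tendsto_atTop] at hy
  refine Metric.tendsto_atTop.2 fun ε hε => ?_
  obtain ⟨N, hN⟩ := hy (ε / 2) (half_pos hε)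
  refine ⟨N, fun n hn => ?_⟩
  rw [dist_eq_norm']
  refine (lp.norm_le_of_forall_le (half_pos hε).le fun i => ?_).trans_lt (half_lt_self hε)
  simp only [lp.coeFn_sub, lp.coeFn_sum, Pi.sub_apply, Finset.sum_apply, lp.single_apply,
    Finset.sum_pi_single, Finset.mem_range]
  split_ifs with hi
  · simpa using (half_pos hε).le
  · simpa [Real.dist_0_eq_abs] using (hN i (by omega)).le

noncomputable def c0Sum.sequenceCoordinates : SequenceCoordinates X (c0Sum fun _ : ℕ => X) where
  coord k := (lp.evalCLM ℝ (fun _ : ℕ => X) ∞ k).comp (c0Sum fun _ : ℕ => X).subtypeL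
  single k := (lp.singleContinuousLinearMap ℝ (fun _ : ℕ => X) ∞ k).codRestrict _
    (lp.single_mem_c0Sum (E := fun _ : ℕ => X) k)
  norm_coord_le k y := lp.norm_apply_le_norm (E := fun _ : ℕ => X) top_ne_zero y k
  norm_single_le k x := (lp.norm_single (E := fun _ : ℕ => X) zero_lt_top k x).le
  coord_single_self := lp.single_apply_self (E := fun _ : ℕ => X) ∞
  coord_single_of_ne h x := lp.single_apply_ne (E := fun _ : ℕ => X) ∞ _ x h.symm
  tendsto_sum_single y := tendsto_subtype_rng.2 <| by
    simp only [Submodule.coe_sum]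
    exact lp.tendsto_sum_single_of_mem_c0Sum y.2

end Instances

/-- `B_T` is hypercyclic on `ℓ^p(X,ℕ)` (resp. `c₀(X,ℕ)`) iff for every finite
family of non-empty open sets `U_1,…,U_N ⊆ X` there is `n ≥ 1` with
`T^n(B_X(0,1)) ∩ U_j ≠ ∅` for all `j`. -/
theorem stmt_2 {X : Type*} [NormedAddCommGroup X] [NormedSpace ℝ X] [CompleteSpace X]
    [TopologicalSpace.SeparableSpace X]
    (T : X →L[ℝ] X) (p : ℝ≥0∞) [Fact (1 ≤ p)] (hp : p ≠ ∞) :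
    (∀ B : lp (fun _ : ℕ => X) p →L[ℝ] lp (fun _ : ℕ => X) p,
      (∀ (x : lp (fun _ : ℕ => X) p) (k : ℕ),
          (B x : ℕ → X) k = T ((x : ℕ → X) (k + 1))) →
      (Hypercyclic ⇑B ↔
        ∀ N : ℕ, 1 ≤ N → ∀ U : Fin N → Set X, (∀ j, IsOpen (U j)) → (∀ j, (U j).Nonempty) →
          ∃ n : ℕ, 1 ≤ n ∧ ∀ j, ((⇑T)^[n] '' Metric.ball (0 : X) 1 ∩ U j).Nonempty))
    ∧ (∀ B : c0Sum (fun _ : ℕ => X) →L[ℝ] c0Sum (fun _ : ℕ => X),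
      (∀ (x : c0Sum (fun _ : ℕ => X)) (k : ℕ),
          ((B x : lp (fun _ : ℕ => X) ∞) : ℕ → X) k
            = T (((x : lp (fun _ : ℕ => X) ∞) : ℕ → X) (k + 1))) →
      (Hypercyclic ⇑B ↔
        ∀ N : ℕ, 1 ≤ N → ∀ U : Fin N → Set X, (∀ j, IsOpen (U j)) → (∀ j, (U j).Nonempty) →
          ∃ n : ℕ, 1 ≤ n ∧ ∀ j, ((⇑T)^[n] '' Metric.ball (0 : X) 1 ∩ U j).Nonempty)) :=
  ⟨fun _ hB => (lp.sequenceCoordinates p hp).hypercyclic_iff hB,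
    fun _ hB => c0Sum.sequenceCoordinates.hypercyclic_iff fun y k => hB y k⟩
end

section
/- Let $X = \ell^p((X_k)_{k\ge 1},\mathbb{N})$ be the $\ell^p$-sum of Banach spaces $X_k$, and let $T = B_{(T_k)}$ be a bounded shift operator on $X$, where $T_k: X_k\to X_{k-1}$. Then the map $\phi: \ell^p(X,\mathbb{N}) \to X$ sending $((x_{1,1},x_{1,2},\dots),(x_{2,1},x_{2,2},\dots),\dots) \mapsto (x_{1,1},x_{2,2},x_{3,3},\dots)$ is a well-defined surjective linear contraction satisfying $\phi\circ B_T = T\circ\phi$. Hence $T$ is quasi-conjugate to $B_T$ on $\ell^p(X,\mathbb{N})$. -/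
open Filter Topology ENNReal

/-
The diagonal map `y ↦ (y₁₁, y₂₂, …)` is dominated coordinatewise by `‖yₖ‖`, which makes it a
contraction from `ℓ^p(ℓ^p(E))` to `ℓ^p(E)`, and it has the isometric right inverse
`x ↦ (single 1 x₁, single 2 x₂, …)`. The intertwining `φ ∘ B_T = T ∘ φ` is a coordinate
computation: both sides have `k`-th coordinate `T_k ((y_{k+1})_{k+1})`.
-/

theorem ENNReal.ne_zero_of_fact_one_le (p : ℝ≥0∞) [Fact (1 ≤ p)] : p ≠ 0 :=
  (zero_lt_one.trans_le (Fact.out : (1 : ℝ≥0∞) ≤ p)).ne'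

namespace lp

variable {𝕜 ι : Type*} [NormedField 𝕜] {E : ι → Type*} [∀ i, NormedAddCommGroup (E i)]
  [∀ i, NormedSpace 𝕜 (E i)] {p : ℝ≥0∞} [Fact (1 ≤ p)]

theorem memℓp_diag (y : lp (fun _ : ι => lp E p) p) :
    Memℓp (fun i => ((y : ι → lp E p) i : ∀ i, E i) i) p :=
  (lp.memℓp y).mono' fun i => norm_apply_le_norm p.ne_zero_of_fact_one_le _ i

theorem memℓp_single_diag [DecidableEq ι] (x : lp E p) :
    Memℓp (fun i => lp.single p i ((x : ∀ i, E i) i)) p :=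
  (lp.memℓp x).mono' fun i => (lp.norm_single (pos_iff_ne_zero.2 p.ne_zero_of_fact_one_le) i _).le

theorem norm_mk_diag_le (y : lp (fun _ : ι => lp E p) p) :
    ‖(⟨_, memℓp_diag y⟩ : lp E p)‖ ≤ ‖y‖ :=
  norm_mono p.ne_zero_of_fact_one_le fun i =>
    norm_apply_le_norm p.ne_zero_of_fact_one_le ((y : ι → lp E p) i) i

variable (𝕜 E p) in
noncomputable def diag : lp (fun _ : ι => lp E p) p →L[𝕜] lp E p :=
  LinearMap.mkContinuous
    { toFun := fun y => ⟨_, memℓp_diag y⟩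
      map_add' := fun _ _ => rfl
      map_smul' := fun _ _ => rfl }
    1 fun y => (one_mul ‖y‖).symm ▸ norm_mk_diag_le y

@[simp]
theorem diag_apply (y : lp (fun _ : ι => lp E p) p) (i : ι) :
    (diag 𝕜 E p y : ∀ i, E i) i = ((y : ι → lp E p) i : ∀ i, E i) i :=
  rfl

theorem norm_diag_apply_le (y : lp (fun _ : ι => lp E p) p) : ‖diag 𝕜 E p y‖ ≤ ‖y‖ :=
  norm_mk_diag_le y

theorem diag_surjective : Function.Surjective (diag 𝕜 E p) := fun x => by
  classical
  exact ⟨⟨_, memℓp_single_diag x⟩, lp.ext <| funext fun i => lp.single_apply_self p i _⟩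

theorem semiconj_diag {E : ℕ → Type*} [∀ k, NormedAddCommGroup (E k)] [∀ k, NormedSpace 𝕜 (E k)]
    {T : ∀ k : ℕ, E (k + 1) → E k} {B : lp E p → lp E p}
    (hB : ∀ (x : lp E p) (k : ℕ), (B x : ∀ i, E i) k = T k ((x : ∀ i, E i) (k + 1)))
    {BT : lp (fun _ : ℕ => lp E p) p → lp (fun _ : ℕ => lp E p) p}
    (hBT : ∀ (y : lp (fun _ : ℕ => lp E p) p) (k : ℕ),
      (BT y : ℕ → lp E p) k = B ((y : ℕ → lp E p) (k + 1))) :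
    Function.Semiconj (diag 𝕜 E p) BT B := fun y =>
  lp.ext <| funext fun k => by simp only [diag_apply, hBT, hB]

end lp

theorem stmt_5_general (E : ℕ → Type*) [∀ k, NormedAddCommGroup (E k)] [∀ k, NormedSpace ℝ (E k)]
    (p : ℝ≥0∞) [Fact (1 ≤ p)]
    (T : ∀ k : ℕ, E (k + 1) →L[ℝ] E k)
    (Btk : lp E p →L[ℝ] lp E p)
    (hBtk : ∀ (x : lp E p) (k : ℕ),
      (Btk x : ∀ i, E i) k = T k ((x : ∀ i, E i) (k + 1))) :
    ∃ φ : lp (fun _ : ℕ => lp E p) p →L[ℝ] lp E p,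
      (∀ (y : lp (fun _ : ℕ => lp E p) p) (k : ℕ),
        (φ y : ∀ i, E i) k = (((y : ℕ → lp E p) k : ∀ i, E i)) k)
      ∧ Function.Surjective φ ∧ (∀ y, ‖φ y‖ ≤ ‖y‖) ∧ DenseRange φ
      ∧ ∀ BT : lp (fun _ : ℕ => lp E p) p →L[ℝ] lp (fun _ : ℕ => lp E p) p,
          (∀ (y : lp (fun _ : ℕ => lp E p) p) (k : ℕ),
            (BT y : ℕ → lp E p) k = Btk ((y : ℕ → lp E p) (k + 1))) →
          ∀ y, φ (BT y) = Btk (φ y) :=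
  ⟨lp.diag ℝ E p, lp.diag_apply, lp.diag_surjective, lp.norm_diag_apply_le,
    lp.diag_surjective.denseRange, fun _ hBT => lp.semiconj_diag hBtk hBT⟩

/-- for `X = ℓ^p((X_k)_k, ℕ)` and `T = B_{(T_k)}` a bounded shift on `X`,
the diagonal map `φ : ℓ^p(X,ℕ) → X`, `(y_1,y_2,…) ↦ ((y_1)_1,(y_2)_2,…)`, is a surjective
linear contraction intertwining `B_T` with `T`; hence `T` is quasi-conjugate to `B_T`. -/
theorem stmt_5 (E : ℕ → Type*) [∀ k, NormedAddCommGroup (E k)] [∀ k, NormedSpace ℝ (E k)]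
    [∀ k, CompleteSpace (E k)] (p : ℝ≥0∞) [Fact (1 ≤ p)] (hp : p ≠ ∞)
    (T : ∀ k : ℕ, E (k + 1) →L[ℝ] E k)
    (Btk : lp E p →L[ℝ] lp E p)
    (hBtk : ∀ (x : lp E p) (k : ℕ),
      (Btk x : ∀ i, E i) k = T k ((x : ∀ i, E i) (k + 1))) :
    ∃ φ : lp (fun _ : ℕ => lp E p) p →L[ℝ] lp E p,
      (∀ (y : lp (fun _ : ℕ => lp E p) p) (k : ℕ),
        (φ y : ∀ i, E i) k = (((y : ℕ → lp E p) k : ∀ i, E i)) k)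
      ∧ Function.Surjective φ ∧ (∀ y, ‖φ y‖ ≤ ‖y‖) ∧ DenseRange φ
      ∧ ∀ BT : lp (fun _ : ℕ => lp E p) p →L[ℝ] lp (fun _ : ℕ => lp E p) p,
          (∀ (y : lp (fun _ : ℕ => lp E p) p) (k : ℕ),
            (BT y : ℕ → lp E p) k = Btk ((y : ℕ → lp E p) (k + 1))) →
          ∀ y, φ (BT y) = Btk (φ y) :=
  stmt_5_general E p T Btk hBtk
end

section
/- Let $B_{(T_k)}$ be a bounded shift operator on $\ell^p((X_k)_k,\mathbb{Z})$ (or $c_0((X_k)_k,\mathbb{Z})$) with $T_k\in L(X_k,X_{k-1})$. Then $B_{(T_k)}$ is mixing if and only if for every $j\in\mathbb{Z}$ and all non-empty open subsets $U_j, V_j$ of $X_j$, there exists $n_0$ such that for all $n\ge n_0$: $T_{j-n,j}U_j \cap B_{j-n}(0,1) \ne \emptyset$ and $T_{j,j+n}B_{j+n}(0,1)\cap V_j \ne \emptyset$, where $T_{k,n} = T_{k+1}\circ\cdots\circ T_n$ for $k<n$ and $T_{n,n}=I$. -/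
open Filter Topology ENNReal

/-!
For a linear map `B` on a metric space, mixing means that for all `x`, `y` and `ε > 0`, for every
large `n` some `z` within `ε` of `x` has `Bⁿ z` within `ε` of `y`. The set of such pairs `(x, y)` is
closed and, by linearity, closed under addition; since finitely supported sequences are dense it
suffices to treat the pairs `(e_j u, 0)` and `(0, e_j v)`. As `Bⁿ (e_j u) = e_{j-n} (T_{j-n,j} u)`,
these are exactly the two conditions on `T`, once the unit ball in them is rescaled to an
`ε`-ball. Conversely, the coordinates `j - n`, `j` and `j + n` of a point witnessing mixing for
the pair `(e_j u, e_j v)` witness the two conditions.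
-/

section

variable {Y : Type*}

def EventuallyNearlyMapsTo [PseudoMetricSpace Y] (f : Y → Y) (x y : Y) : Prop :=
  ∀ ε > 0, ∀ᶠ n in atTop, ∃ z, dist z x < ε ∧ dist (f^[n] z) y < ε

theorem topologicallyMixing_iff_forall_eventuallyNearlyMapsTo [PseudoMetricSpace Y]
    {f : Y → Y} : TopologicallyMixing f ↔ ∀ x y, EventuallyNearlyMapsTo f x y := by
  constructor
  · intro hmix x y ε hε
    obtain ⟨N, hN⟩ := hmix _ _ Metric.isOpen_ball Metric.isOpen_ball
      ⟨x, Metric.mem_ball_self hε⟩ ⟨y, Metric.mem_ball_self hε⟩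
    filter_upwards [eventually_ge_atTop N] with n hn
    obtain ⟨_, ⟨z, hz, rfl⟩, hfz⟩ := hN n hn
    exact ⟨z, hz, hfz⟩
  · rintro h U V hU hV ⟨x, hx⟩ ⟨y, hy⟩
    obtain ⟨εU, hεU, hballU⟩ := Metric.isOpen_iff.mp hU x hx
    obtain ⟨εV, hεV, hballV⟩ := Metric.isOpen_iff.mp hV y hy
    obtain ⟨N, hN⟩ := eventually_atTop.mp (h x y _ (lt_min hεU hεV))
    refine ⟨N, fun n hn => ?_⟩
    obtain ⟨z, hzx, hzy⟩ := hN n hn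
    exact ⟨f^[n] z, ⟨z, hballU (hzx.trans_le (min_le_left _ _)), rfl⟩,
      hballV (hzy.trans_le (min_le_right _ _))⟩

namespace EventuallyNearlyMapsTo

theorem of_forall_approx [PseudoMetricSpace Y] {f : Y → Y} {x y : Y}
    (h : ∀ ε > 0, ∃ x' y', dist x x' < ε ∧ dist y y' < ε ∧ EventuallyNearlyMapsTo f x' y') :
    EventuallyNearlyMapsTo f x y := by
  intro ε hε
  obtain ⟨x', y', hx, hy, h'⟩ := h (ε / 2) (half_pos hε)
  filter_upwards [h' (ε / 2) (half_pos hε)] with n ⟨z, hzx, hzy⟩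
  refine ⟨z, ?_, ?_⟩
  · linarith [dist_triangle z x' x, dist_comm x x']
  · linarith [dist_triangle (f^[n] z) y' y, dist_comm y y']

variable [SeminormedAddCommGroup Y] {F : Type*} [FunLike F Y Y] [AddMonoidHomClass F Y Y] {f : F}

theorem zero : EventuallyNearlyMapsTo f 0 0 :=
  fun _ hε => Eventually.of_forall fun n => ⟨0, by simpa using hε, by simpa using hε⟩

theorem add {x₁ x₂ y₁ y₂ : Y} (h₁ : EventuallyNearlyMapsTo f x₁ y₁)
    (h₂ : EventuallyNearlyMapsTo f x₂ y₂) : EventuallyNearlyMapsTo f (x₁ + x₂) (y₁ + y₂) := by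
  intro ε hε
  filter_upwards [h₁ (ε / 2) (half_pos hε), h₂ (ε / 2) (half_pos hε)]
    with n ⟨z₁, hz₁x, hz₁y⟩ ⟨z₂, hz₂x, hz₂y⟩
  refine ⟨z₁ + z₂, ?_, ?_⟩
  · linarith [dist_add_add_le z₁ z₂ x₁ x₂]
  · rw [iterate_map_add]
    linarith [dist_add_add_le (f^[n] z₁) (f^[n] z₂) y₁ y₂]

theorem sum {ι : Type*} {s : Finset ι} {x y : ι → Y}
    (h : ∀ i ∈ s, EventuallyNearlyMapsTo f (x i) (y i)) :
    EventuallyNearlyMapsTo f (∑ i ∈ s, x i) (∑ i ∈ s, y i) := by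
  simpa only [Prod.fst_sum, Prod.snd_sum] using
    Finset.sum_induction (fun i => (x i, y i)) (fun q => EventuallyNearlyMapsTo f q.1 q.2)
      (fun _ _ => add) zero h

end EventuallyNearlyMapsTo

end

/-- The paper's `T_{j-n,j}`, as a map out of `E j`. -/
noncomputable def iterCompFrom {E : ℤ → Type*} [∀ k, NormedAddCommGroup (E k)]
    [∀ k, NormedSpace ℝ (E k)] (T : ∀ k : ℤ, E (k + 1) →L[ℝ] E k) (j : ℤ) (n : ℕ) :
    E j →L[ℝ] E (j - n) :=
  (iterComp T (j - n) n).comp (castL E (Int.sub_add_cancel j n).symm)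

/-- `Y` realised as a space of sequences `(y k)_k` with `y k ∈ E k`: `coord k` reads off the `k`-th
term, `single k a` is the sequence with `a` in place `k` and `0` elsewhere, and finitely
supported sequences are dense. -/
structure SequenceSpace {ι : Type*} (E : ι → Type*) [∀ k, NormedAddCommGroup (E k)]
    [∀ k, NormedSpace ℝ (E k)] (Y : Type*) [NormedAddCommGroup Y] [NormedSpace ℝ Y] where
  coord : ∀ k, Y →ₗ[ℝ] E k
  single : ∀ k, E k →ₗ[ℝ] Y
  norm_coord_le : ∀ k y, ‖coord k y‖ ≤ ‖y‖
  norm_single_le : ∀ k a, ‖single k a‖ ≤ ‖a‖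
  coord_single_self : ∀ k a, coord k (single k a) = a
  coord_single_of_ne : ∀ {k m} (a : E m), k ≠ m → coord k (single m a) = 0
  ext : ∀ y z, (∀ k, coord k y = coord k z) → y = z
  exists_sum_single_near : ∀ y, ∀ ε > 0, ∃ (s : Finset ι) (a : ∀ k, E k),
    dist y (∑ k ∈ s, single k (a k)) < ε

namespace SequenceSpace

section General

variable {ι : Type*} {E : ι → Type*} [∀ k, NormedAddCommGroup (E k)] [∀ k, NormedSpace ℝ (E k)]
  {Y : Type*} [NormedAddCommGroup Y] [NormedSpace ℝ Y] (D : SequenceSpace E Y)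

theorem dist_coord_le (k : ι) (y z : Y) : dist (D.coord k y) (D.coord k z) ≤ dist y z := by
  simpa only [dist_eq_norm, map_sub] using D.norm_coord_le k (y - z)

theorem dist_single_le (k : ι) (a b : E k) : dist (D.single k a) (D.single k b) ≤ dist a b := by
  simpa only [dist_eq_norm, map_sub] using D.norm_single_le k (a - b)

theorem dist_coord_lt_of_dist_single_lt {y : Y} {k : ι} {a : E k} {ε : ℝ}
    (h : dist y (D.single k a) < ε) : dist (D.coord k y) a < ε := by
  simpa only [D.coord_single_self] using (D.dist_coord_le k _ _).trans_lt h

theorem norm_coord_lt_of_dist_single_lt {y : Y} {k m : ι} (hkm : k ≠ m) {a : E m} {ε : ℝ}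
    (h : dist y (D.single m a) < ε) : ‖D.coord k y‖ < ε := by
  simpa only [D.coord_single_of_ne a hkm, dist_zero_right] using (D.dist_coord_le k _ _).trans_lt h

end General

section Shift

variable {E : ℤ → Type*} [∀ k, NormedAddCommGroup (E k)] [∀ k, NormedSpace ℝ (E k)]
  {Y : Type*} [NormedAddCommGroup Y] [NormedSpace ℝ Y] (D : SequenceSpace E Y)

theorem coord_castL {j k : ℤ} (h : j = k) (y : Y) : castL E h (D.coord j y) = D.coord k y := by
  subst h; rfl

theorem single_castL {j k : ℤ} (h : j = k) (a : E j) : D.single k (castL E h a) = D.single j a := by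
  subst h; rfl

variable (T : ∀ k : ℤ, E (k + 1) →L[ℝ] E k) {B : Y → Y}
  (hB : ∀ y k, D.coord k (B y) = T k (D.coord (k + 1) y))
include hB

theorem coord_iterate (n : ℕ) (j : ℤ) (y : Y) :
    D.coord j (B^[n] y) = iterComp T j n (D.coord (j + n) y) := by
  induction n generalizing y with
  | zero => exact (D.coord_castL _ y).symm
  | succ n ih =>
    rw [Function.iterate_succ_apply, ih, hB]
    exact congrArg (iterComp T j n ∘ T (j + n)) (D.coord_castL (by push_cast; ring) y).symm

theorem coord_sub_iterate (n : ℕ) (j : ℤ) (y : Y) :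
    D.coord (j - n) (B^[n] y) = iterCompFrom T j n (D.coord j y) := by
  rw [iterCompFrom, ContinuousLinearMap.comp_apply, D.coord_castL, D.coord_iterate T hB]

theorem iterate_single (n : ℕ) (k : ℤ) (a : E (k + n)) :
    B^[n] (D.single (k + n) a) = D.single k (iterComp T k n a) := by
  refine D.ext _ _ fun m => ?_
  rw [D.coord_iterate T hB]
  by_cases hm : m = k
  · subst hm
    rw [D.coord_single_self, D.coord_single_self]
  · rw [D.coord_single_of_ne _ (by omega), D.coord_single_of_ne _ hm, map_zero]

theorem iterate_single_sub (n : ℕ) (j : ℤ) (a : E j) :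
    B^[n] (D.single j a) = D.single (j - n) (iterCompFrom T j n a) := by
  rw [iterCompFrom, ContinuousLinearMap.comp_apply, ← D.iterate_single T hB, D.single_castL]

end Shift

end SequenceSpace

section

variable {E : ℤ → Type*} [∀ k, NormedAddCommGroup (E k)] [∀ k, NormedSpace ℝ (E k)]

def ShiftMixingCondition (T : ∀ k : ℤ, E (k + 1) →L[ℝ] E k) : Prop :=
  ∀ (j : ℤ) (U V : Set (E j)), IsOpen U → U.Nonempty → IsOpen V → V.Nonempty →
    ∃ n₀ : ℕ, ∀ n ≥ n₀,
      ((iterCompFrom T j n '' U) ∩ Metric.ball (0 : E (j - (n : ℤ))) 1).Nonempty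
      ∧ ((iterComp T j n '' Metric.ball (0 : E (j + (n : ℤ))) 1) ∩ V).Nonempty

namespace ShiftMixingCondition

open Pointwise

variable {T : ∀ k : ℤ, E (k + 1) →L[ℝ] E k} (hc : ShiftMixingCondition T)
include hc

theorem eventually_exists_mem_norm_lt (j : ℤ) {U : Set (E j)} (hU : IsOpen U)
    (hUne : U.Nonempty) {r : ℝ} (hr : 0 < r) :
    ∀ᶠ n : ℕ in atTop, ∃ u ∈ U, ‖iterCompFrom T j n u‖ < r := by
  obtain ⟨n₀, h⟩ := hc j (r⁻¹ • U) Set.univ (hU.smul₀ (inv_ne_zero hr.ne')) hUne.smul_set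
    isOpen_univ Set.univ_nonempty
  filter_upwards [eventually_ge_atTop n₀] with n hn
  obtain ⟨_, ⟨u, hu, rfl⟩, hball⟩ := (h n hn).1
  refine ⟨r • u, ?_, ?_⟩
  · rwa [Set.mem_smul_set_iff_inv_smul_mem₀ (inv_ne_zero hr.ne'), inv_inv] at hu
  · rw [mem_ball_zero_iff] at hball
    rw [map_smul, norm_smul, Real.norm_of_nonneg hr.le]
    exact mul_lt_of_lt_one_right hr hball

theorem eventually_exists_norm_lt_mem (j : ℤ) {V : Set (E j)} (hV : IsOpen V)
    (hVne : V.Nonempty) {r : ℝ} (hr : 0 < r) :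
    ∀ᶠ n : ℕ in atTop, ∃ w : E (j + n), ‖w‖ < r ∧ iterComp T j n w ∈ V := by
  obtain ⟨n₀, h⟩ := hc j Set.univ (r⁻¹ • V) isOpen_univ Set.univ_nonempty
    (hV.smul₀ (inv_ne_zero hr.ne')) hVne.smul_set
  filter_upwards [eventually_ge_atTop n₀] with n hn
  obtain ⟨_, ⟨w, hw, rfl⟩, hV'⟩ := (h n hn).2
  refine ⟨r • w, ?_, ?_⟩
  · rw [mem_ball_zero_iff] at hw
    rw [norm_smul, Real.norm_of_nonneg hr.le]
    exact mul_lt_of_lt_one_right hr hw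
  · rwa [Set.mem_smul_set_iff_inv_smul_mem₀ (inv_ne_zero hr.ne'), inv_inv, ← map_smul] at hV'

end ShiftMixingCondition

end

namespace SequenceSpace

variable {E : ℤ → Type*} [∀ k, NormedAddCommGroup (E k)] [∀ k, NormedSpace ℝ (E k)]
  {Y : Type*} [NormedAddCommGroup Y] [NormedSpace ℝ Y] (D : SequenceSpace E Y)
  (T : ∀ k : ℤ, E (k + 1) →L[ℝ] E k)

section

variable {B : Y → Y} (hB : ∀ y k, D.coord k (B y) = T k (D.coord (k + 1) y))
include hB

theorem shiftMixingCondition_of_topologicallyMixing (hmix : TopologicallyMixing B) :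
    ShiftMixingCondition T := by
  rintro j U V hU ⟨u, hu⟩ hV ⟨v, hv⟩
  obtain ⟨εU, hεU, hballU⟩ := Metric.isOpen_iff.mp hU u hu
  obtain ⟨εV, hεV, hballV⟩ := Metric.isOpen_iff.mp hV v hv
  set ε := min (min εU εV) 1
  have hε : 0 < ε := lt_min (lt_min hεU hεV) one_pos
  obtain ⟨N, hN⟩ := eventually_atTop.mp <| topologicallyMixing_iff_forall_eventuallyNearlyMapsTo.mp
    hmix (D.single j u) (D.single j v) ε hε
  refine ⟨N + 1, fun n hn => ?_⟩
  obtain ⟨z, hzu, hzv⟩ := hN n (by omega)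
  have hε1 : ε ≤ 1 := min_le_right _ _
  refine ⟨⟨D.coord (j - n) (B^[n] z), ⟨D.coord j z, ?_, ?_⟩, ?_⟩,
    ⟨D.coord j (B^[n] z), ⟨D.coord (j + n) z, ?_, ?_⟩, ?_⟩⟩
  · exact hballU <| (D.dist_coord_lt_of_dist_single_lt hzu).trans_le
      ((min_le_left _ _).trans (min_le_left _ _))
  · exact (D.coord_sub_iterate T hB n j z).symm
  · exact mem_ball_zero_iff.mpr <|
      (D.norm_coord_lt_of_dist_single_lt (by omega) hzv).trans_le hε1
  · exact mem_ball_zero_iff.mpr <|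
      (D.norm_coord_lt_of_dist_single_lt (by omega) hzu).trans_le hε1
  · exact (D.coord_iterate T hB n j z).symm
  · exact hballV <| (D.dist_coord_lt_of_dist_single_lt hzv).trans_le
      ((min_le_left _ _).trans (min_le_right _ _))

theorem eventuallyNearlyMapsTo_single_zero (hc : ShiftMixingCondition T) (j : ℤ) (a : E j) :
    EventuallyNearlyMapsTo B (D.single j a) 0 := by
  intro ε hε
  filter_upwards [hc.eventually_exists_mem_norm_lt j Metric.isOpen_ball
    ⟨a, Metric.mem_ball_self hε⟩ hε] with n ⟨u, hu, hTu⟩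
  refine ⟨D.single j u, (D.dist_single_le j u a).trans_lt hu, ?_⟩
  rw [D.iterate_single_sub T hB, dist_zero_right]
  exact (D.norm_single_le _ _).trans_lt hTu

theorem eventuallyNearlyMapsTo_zero_single (hc : ShiftMixingCondition T) (j : ℤ) (a : E j) :
    EventuallyNearlyMapsTo B 0 (D.single j a) := by
  intro ε hε
  filter_upwards [hc.eventually_exists_norm_lt_mem j Metric.isOpen_ball
    ⟨a, Metric.mem_ball_self hε⟩ hε] with n ⟨w, hw, hTw⟩
  refine ⟨D.single (j + n) w, ?_, ?_⟩
  · rw [dist_zero_right]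
    exact (D.norm_single_le _ _).trans_lt hw
  · rw [D.iterate_single T hB]
    exact (D.dist_single_le j _ a).trans_lt hTw

end

variable {F : Type*} [FunLike F Y Y] [AddMonoidHomClass F Y Y] {B : F}
  (hB : ∀ y k, D.coord k (B y) = T k (D.coord (k + 1) y))
include hB

theorem topologicallyMixing_of_shiftMixingCondition (hc : ShiftMixingCondition T) :
    TopologicallyMixing B := by
  refine topologicallyMixing_iff_forall_eventuallyNearlyMapsTo.mpr fun x y =>
    EventuallyNearlyMapsTo.of_forall_approx fun ε hε => ?_
  obtain ⟨s, a, ha⟩ := D.exists_sum_single_near x ε hε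
  obtain ⟨t, b, hb⟩ := D.exists_sum_single_near y ε hε
  refine ⟨_, _, ha, hb, ?_⟩
  simpa only [Finset.sum_const_zero, add_zero, zero_add] using
    (EventuallyNearlyMapsTo.sum fun k _ => D.eventuallyNearlyMapsTo_single_zero T hB hc k (a k)).add
      (EventuallyNearlyMapsTo.sum fun k _ => D.eventuallyNearlyMapsTo_zero_single T hB hc k (b k))

theorem topologicallyMixing_iff : TopologicallyMixing B ↔ ShiftMixingCondition T :=
  ⟨D.shiftMixingCondition_of_topologicallyMixing T hB,
    D.topologicallyMixing_of_shiftMixingCondition T hB⟩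

end SequenceSpace

section Instances

variable {ι : Type*} [DecidableEq ι] {E : ι → Type*} [∀ k, NormedAddCommGroup (E k)]
  [∀ k, NormedSpace ℝ (E k)]

noncomputable def lpSequenceSpace (p : ℝ≥0∞) [Fact (1 ≤ p)] (hp : p ≠ ∞) :
    SequenceSpace E (lp E p) where
  coord k := lp.evalₗ E p k
  single k := lp.lsingle p k
  norm_coord_le k y := lp.norm_apply_le_norm (zero_lt_one.trans_le Fact.out).ne' y k
  norm_single_le k a := (lp.norm_single (zero_lt_one.trans_le Fact.out) k a).le
  coord_single_self := lp.single_apply_self p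
  coord_single_of_ne a h := lp.single_apply_ne p _ a h
  ext _ _ h := lp.ext (funext h)
  exists_sum_single_near y ε hε := by
    obtain ⟨s, hs⟩ := ((lp.hasSum_single hp y).eventually (Metric.ball_mem_nhds y hε)).exists
    exact ⟨s, y, by rwa [dist_comm]⟩

theorem lp_single_mem_c0Sum (k : ι) (a : E k) : lp.single ∞ k a ∈ c0Sum E :=
  tendsto_const_nhds.congr' <| (eventually_cofinite_ne k).mono fun i hi => by
    simp [Pi.single_eq_of_ne hi]

theorem c0Sum_exists_sum_single_near (y : c0Sum E) {ε : ℝ} (hε : 0 < ε) :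
    ∃ s : Finset ι, dist y (∑ k ∈ s, ⟨lp.single ∞ k (y.1 k), lp_single_mem_c0Sum k _⟩) < ε := by
  have hsmall : ∀ᶠ i in cofinite, ‖y.1 i‖ < ε / 2 :=
    (show Tendsto _ _ _ from y.2).eventually (gt_mem_nhds (half_pos hε))
  set s := (eventually_cofinite.mp hsmall).toFinset
  refine ⟨s, lt_of_le_of_lt ?_ (half_lt_self hε)⟩
  rw [Subtype.dist_eq, dist_eq_norm, Submodule.coe_sum]
  refine lp.norm_le_of_forall_le (half_pos hε).le fun i => ?_
  simp only [lp.coeFn_sub, Pi.sub_apply, lp.coeFn_sum, Finset.sum_apply, lp.coeFn_single,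
    Finset.sum_pi_single]
  split_ifs with hi
  · simpa using (half_pos hε).le
  · simp only [s, Set.Finite.mem_toFinset, Set.mem_ofPred_eq, not_not] at hi
    simpa using hi.le

noncomputable def c0SequenceSpace : SequenceSpace E (c0Sum E) where
  coord k := (lp.evalₗ E ∞ k).comp (c0Sum E).subtype
  single k := (lp.lsingle ∞ k).codRestrict (c0Sum E) (lp_single_mem_c0Sum k)
  norm_coord_le k y := lp.norm_apply_le_norm ENNReal.top_ne_zero y.1 k
  norm_single_le k a := (lp.norm_single ENNReal.zero_lt_top k a).le
  coord_single_self := lp.single_apply_self ∞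
  coord_single_of_ne a h := lp.single_apply_ne ∞ _ a h
  ext _ _ h := Subtype.ext (lp.ext (funext h))
  exists_sum_single_near y _ hε :=
    let ⟨s, hs⟩ := c0Sum_exists_sum_single_near y hε
    ⟨s, fun k => y.1 k, hs⟩

end Instances

/-- the bilateral shift `B_{(T_k)}` on `ℓ^p((X_k)_k,ℤ)` (resp. `c₀((X_k)_k,ℤ)`)
is mixing iff for each `j` and all non-empty open `U, V ⊆ X_j` there is `n₀` such that for
all `n ≥ n₀`, `T_{j-n,j} U ∩ B_{j-n}(0,1) ≠ ∅` and `T_{j,j+n} B_{j+n}(0,1) ∩ V ≠ ∅`. -/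
theorem stmt_6 (E : ℤ → Type*) [∀ k, NormedAddCommGroup (E k)] [∀ k, NormedSpace ℝ (E k)]
    (T : ∀ k : ℤ, E (k + 1) →L[ℝ] E k)
    (p : ℝ≥0∞) [Fact (1 ≤ p)] (hp : p ≠ ∞) :
    (∀ B : lp E p →L[ℝ] lp E p,
      (∀ (x : lp E p) (k : ℤ), (B x : ∀ i, E i) k = T k ((x : ∀ i, E i) (k + 1))) →
      (TopologicallyMixing ⇑B ↔
        ∀ (j : ℤ) (U V : Set (E j)), IsOpen U → U.Nonempty → IsOpen V → V.Nonempty →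
          ∃ n₀ : ℕ, ∀ n ≥ n₀,
            ((((iterComp T (j - n) n).comp (castL E (by omega))) '' U)
                ∩ Metric.ball (0 : E (j - (n : ℤ))) 1).Nonempty
            ∧ ((iterComp T j n '' Metric.ball (0 : E (j + (n : ℤ))) 1) ∩ V).Nonempty))
    ∧ (∀ B : c0Sum E →L[ℝ] c0Sum E,
      (∀ (x : c0Sum E) (k : ℤ),
        ((B x : lp E ∞) : ∀ i, E i) k = T k (((x : lp E ∞) : ∀ i, E i) (k + 1))) →
      (TopologicallyMixing ⇑B ↔
        ∀ (j : ℤ) (U V : Set (E j)), IsOpen U → U.Nonempty → IsOpen V → V.Nonempty →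
          ∃ n₀ : ℕ, ∀ n ≥ n₀,
            ((((iterComp T (j - n) n).comp (castL E (by omega))) '' U)
                ∩ Metric.ball (0 : E (j - (n : ℤ))) 1).Nonempty
            ∧ ((iterComp T j n '' Metric.ball (0 : E (j + (n : ℤ))) 1) ∩ V).Nonempty)) :=
  ⟨fun _ hB => (lpSequenceSpace p hp).topologicallyMixing_iff T hB,
    fun _ hB => c0SequenceSpace.topologicallyMixing_iff T hB⟩
end

section
/- Let $T$ be a bounded operator on a Banach space $X$. The bilateral shift $B_T$ on $\ell^p(X,\mathbb{Z})$ (or on $c_0(X,\mathbb{Z})$), given by $B_T((x_n)_{n\in\mathbb{Z}}) = (Tx_{n+1})_{n\in\mathbb{Z}}$, is mixing if and only if $T$ is mixing on $X$. -/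
open Filter Topology ENNReal

/-!
Call `(u, v)` a mixing pair of `f` if for every `ε > 0` and all large `n` some point `ε`-close
to `u` is sent `ε`-close to `v` by `f^[n]`; `f` is mixing iff all pairs are mixing pairs. These
pairs form a closed set, an additive submonoid when `f` is additive, and non-expanding maps
intertwining the iterates carry mixing pairs to mixing pairs. Coordinates satisfy
`T^[n] (z (k + n)) = (B^[n] z) k` and unit vectors `B^[n] (e (k + n) x) = e k (T^[n] x)`; through
them the pairs `(x, 0)`, `(0, x)` pass from `B` to `T`, and `(e k x, 0)`, `(0, e k x)` from `T`
to `B`. This suffices because finitely supported sequences are dense in `ℓ^p` (`p < ∞`) and `c₀`.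
-/

section MixingPairs

variable {Y : Type*} [PseudoMetricSpace Y]

def mixingPairs (f : Y → Y) : Set (Y × Y) :=
  {q | ∀ ε > 0, ∀ᶠ n in atTop, ∃ x, dist x q.1 < ε ∧ dist (f^[n] x) q.2 < ε}

theorem topologicallyMixing_iff_forall_mem_mixingPairs {f : Y → Y} :
    TopologicallyMixing f ↔ ∀ u v, (u, v) ∈ mixingPairs f := by
  constructor
  · intro hf u v ε hε
    obtain ⟨N, hN⟩ := hf _ _ Metric.isOpen_ball Metric.isOpen_ball
      ⟨u, Metric.mem_ball_self hε⟩ ⟨v, Metric.mem_ball_self hε⟩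
    filter_upwards [eventually_ge_atTop N] with n hn
    obtain ⟨_, ⟨x, hxu, rfl⟩, hxv⟩ := hN n hn
    exact ⟨x, hxu, hxv⟩
  · rintro hf U V hU hV ⟨u, hu⟩ ⟨v, hv⟩
    obtain ⟨εu, hεu, hUu⟩ := Metric.isOpen_iff.1 hU u hu
    obtain ⟨εv, hεv, hVv⟩ := Metric.isOpen_iff.1 hV v hv
    obtain ⟨N, hN⟩ := eventually_atTop.1 (hf u v _ (lt_min hεu hεv))
    refine ⟨N, fun n hn => ?_⟩
    obtain ⟨x, hxu, hxv⟩ := hN n hn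
    exact ⟨_, ⟨x, hUu (hxu.trans_le (min_le_left _ _)), rfl⟩,
      hVv (hxv.trans_le (min_le_right _ _))⟩

theorem isClosed_mixingPairs (f : Y → Y) : IsClosed (mixingPairs f) := by
  refine isClosed_of_closure_subset fun q hq ε hε => ?_
  obtain ⟨q', hq', hqq'⟩ := Metric.mem_closure_iff.1 hq (ε / 2) (half_pos hε)
  rw [Prod.dist_eq, max_lt_iff] at hqq'
  filter_upwards [hq' (ε / 2) (half_pos hε)] with n ⟨x, hxu, hxv⟩
  refine ⟨x, ?_, ?_⟩
  · linarith [dist_triangle x q'.1 q.1, dist_comm q.1 q'.1]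
  · linarith [dist_triangle (f^[n] x) q'.2 q.2, dist_comm q.2 q'.2]

theorem mem_mixingPairs_of_semiconj {X : Type*} [PseudoMetricSpace X] {f : Y → Y} {g : X → X}
    {u v : Y} {u' v' : X} (h h' : ℕ → Y → X) (hh : ∀ n, LipschitzWith 1 (h n))
    (hh' : ∀ n, LipschitzWith 1 (h' n)) (hcomm : ∀ n y, g^[n] (h n y) = h' n (f^[n] y))
    (hu : ∀ n, h n u = u') (hv : ∀ n, h' n v = v') (huv : (u, v) ∈ mixingPairs f) :
    (u', v') ∈ mixingPairs g := by
  intro ε hε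
  filter_upwards [huv ε hε] with n ⟨x, hxu, hxv⟩
  refine ⟨h n x, ?_, ?_⟩
  · rw [← hu n]
    simpa using ((hh n).dist_le_mul x u).trans_lt (by simpa using hxu)
  · rw [hcomm, ← hv n]
    simpa using ((hh' n).dist_le_mul _ v).trans_lt (by simpa using hxv)

end MixingPairs

section Additive

variable {Z : Type*} [SeminormedAddCommGroup Z]

def mixingPairsAddSubmonoid (f : Z →+ Z) : AddSubmonoid (Z × Z) where
  carrier := mixingPairs f
  zero_mem' ε hε := Eventually.of_forall fun n => ⟨0, by simp [hε], by simp [hε]⟩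
  add_mem' {p q} hp hq ε hε := by
    filter_upwards [hp (ε / 2) (half_pos hε), hq (ε / 2) (half_pos hε)]
      with n ⟨x, hx1, hx2⟩ ⟨y, hy1, hy2⟩
    refine ⟨x + y, ?_, ?_⟩
    · rw [Prod.fst_add]
      linarith [dist_add_add_le x y p.1 q.1]
    · rw [Prod.snd_add, iterate_map_add]
      linarith [dist_add_add_le (f^[n] x) (f^[n] y) p.2 q.2]

theorem topologicallyMixing_of_dense (f : Z →+ Z) {S : Set Z}
    (hS : Dense (AddSubmonoid.closure S : Set Z)) (hS₁ : ∀ s ∈ S, (s, 0) ∈ mixingPairs f)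
    (hS₂ : ∀ s ∈ S, (0, s) ∈ mixingPairs f) : TopologicallyMixing f := by
  have extend : ∀ g : Z →+ Z × Z, Continuous g → (∀ s ∈ S, g s ∈ mixingPairs f) →
      ∀ u, g u ∈ mixingPairs f := fun g hg hgS u =>
    closure_minimal (s := (AddSubmonoid.closure S : Set Z))
      (AddSubmonoid.closure_le (S := (mixingPairsAddSubmonoid f).comap g).2 hgS)
      ((isClosed_mixingPairs f).preimage hg) (hS u)
  refine topologicallyMixing_iff_forall_mem_mixingPairs.2 fun u v => ?_
  have hsum : (u, 0) + (0, v) ∈ mixingPairs f := (mixingPairsAddSubmonoid f).add_mem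
    (extend (AddMonoidHom.inl Z Z) (continuous_id.prodMk continuous_const) hS₁ u)
    (extend (AddMonoidHom.inr Z Z) (continuous_const.prodMk continuous_id) hS₂ v)
  simpa using hsum

end Additive

theorem iterate_semiconj_shift {α β : Type*} {f : α → α} {g : β → β} (φ : ℤ → α → β)
    (hφ : ∀ k a, φ k (f a) = g (φ (k + 1) a)) (n : ℕ) (k : ℤ) (a : α) :
    φ k (f^[n] a) = g^[n] (φ (k + n) a) := by
  induction n generalizing a with
  | zero => simp
  | succ n ih =>
    rw [Function.iterate_succ_apply, ih, hφ, ← Function.iterate_succ_apply g]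
    congr 2
    push_cast
    ring

section Shift

variable {X Z : Type*} [SeminormedAddCommGroup X] [SeminormedAddCommGroup Z]
  {T : X →+ X} {B : Z →+ Z}

theorem topologicallyMixing_of_coord_shift {π : ℤ → Z →+ X} (hπ : ∀ k, LipschitzWith 1 (π k))
    (hB : ∀ k z, π k (B z) = T (π (k + 1) z)) (hsurj : Function.Surjective (π 0))
    (hmix : TopologicallyMixing B) : TopologicallyMixing T := by
  have hiter := iterate_semiconj_shift (fun k => ⇑(π k)) hB
  rw [topologicallyMixing_iff_forall_mem_mixingPairs] at hmix
  refine topologicallyMixing_of_dense T (S := Set.univ) (by simp [dense_univ])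
    (fun u _ => ?_) (fun v _ => ?_)
  · obtain ⟨z, rfl⟩ := hsurj u
    refine mem_mixingPairs_of_semiconj (fun _ => π 0) (fun n => π (-n)) (fun _ => hπ 0)
      (fun _ => hπ _) (fun n y => ?_) (fun _ => rfl) (fun _ => map_zero _) (hmix z 0)
    simpa using (hiter n (-n) y).symm
  · obtain ⟨z, rfl⟩ := hsurj v
    refine mem_mixingPairs_of_semiconj (fun n => π n) (fun _ => π 0) (fun _ => hπ _)
      (fun _ => hπ 0) (fun n y => ?_) (fun _ => map_zero _) (fun _ => rfl) (hmix 0 z)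
    simpa using (hiter n 0 y).symm

theorem topologicallyMixing_of_single_shift {σ : ℤ → X →+ Z} (hσ : ∀ k, LipschitzWith 1 (σ k))
    (hB : ∀ k x, σ k (T x) = B (σ (k + 1) x))
    (hdense : Dense (AddSubmonoid.closure (⋃ k, Set.range (σ k)) : Set Z))
    (hmix : TopologicallyMixing T) : TopologicallyMixing B := by
  have hiter := iterate_semiconj_shift (fun k => ⇑(σ k)) hB
  rw [topologicallyMixing_iff_forall_mem_mixingPairs] at hmix
  refine topologicallyMixing_of_dense B hdense ?_ ?_ <;>
    simp only [Set.mem_iUnion, Set.mem_range] <;> rintro _ ⟨k, x, rfl⟩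
  · refine mem_mixingPairs_of_semiconj (fun _ => σ k) (fun n => σ (k - n)) (fun _ => hσ k)
      (fun _ => hσ _) (fun n y => ?_) (fun _ => rfl) (fun _ => map_zero _) (hmix x 0)
    simpa using (hiter n (k - n) y).symm
  · refine mem_mixingPairs_of_semiconj (fun n => σ (k + n)) (fun _ => σ k) (fun _ => hσ _)
      (fun _ => hσ k) (fun n y => (hiter n k y).symm) (fun _ => map_zero _) (fun _ => rfl)
      (hmix 0 x)

theorem topologicallyMixing_iff_of_shift {π : ℤ → Z →+ X} {σ : ℤ → X →+ Z}
    (hπ : ∀ k, LipschitzWith 1 (π k)) (hσ : ∀ k, LipschitzWith 1 (σ k))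
    (hπσ : ∀ k l x, π k (σ l x) = (Pi.single l x : ℤ → X) k)
    (hext : ∀ z z', (∀ k, π k z = π k z') → z = z')
    (hB : ∀ k z, π k (B z) = T (π (k + 1) z))
    (hdense : Dense (AddSubmonoid.closure (⋃ k, Set.range (σ k)) : Set Z)) :
    TopologicallyMixing B ↔ TopologicallyMixing T := by
  have hBσ : ∀ k x, σ k (T x) = B (σ (k + 1) x) := fun k x => hext _ _ fun m => by
    rw [hB, hπσ, hπσ]
    by_cases hm : m = k <;> simp [hm]
  exact ⟨topologicallyMixing_of_coord_shift hπ hB fun x => ⟨σ 0 x, by simp [hπσ]⟩,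
    topologicallyMixing_of_single_shift hσ hBσ hdense⟩

end Shift

theorem dense_addSubmonoidClosure_of_hasSum {ι X Z : Type*} [AddCommMonoid Z] [TopologicalSpace Z]
    (σ : ι → X → Z) (h : ∀ z, ∃ a : ι → X, HasSum (fun i => σ i (a i)) z) :
    Dense (AddSubmonoid.closure (⋃ i, Set.range (σ i)) : Set Z) := fun z =>
  let ⟨a, ha⟩ := h z
  mem_closure_of_tendsto ha (Eventually.of_forall fun _ => AddSubmonoid.sum_mem _ fun i _ =>
    AddSubmonoid.subset_closure (Set.mem_iUnion.2 ⟨i, a i, rfl⟩))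

namespace c0Sum

variable {ι : Type*} {E : ι → Type*} [∀ i, NormedAddCommGroup (E i)]
  [∀ i, NormedSpace ℝ (E i)]

noncomputable def eval (i : ι) : c0Sum E →+ E i :=
  ((lp.evalₗ E ∞ i).comp (c0Sum E).subtype).toAddMonoidHom

theorem lipschitzWith_one_eval (i : ι) : LipschitzWith 1 (eval (E := E) i) :=
  mul_one (1 : NNReal) ▸ (lp.lipschitzWith_one_eval ∞ i).comp (LipschitzWith.subtype_val _)

variable [DecidableEq ι]

theorem single_mem (i : ι) (x : E i) : lp.single ∞ i x ∈ c0Sum E := by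
  refine tendsto_const_nhds.congr' ?_
  filter_upwards [eventually_cofinite_ne i] with j hj
  simp [Pi.single_eq_of_ne hj]

noncomputable def single (i : ι) : E i →+ c0Sum E :=
  (lp.singleAddMonoidHom ∞ i).codRestrict (c0Sum E).toAddSubmonoid (single_mem i)

theorem lipschitzWith_one_single (i : ι) : LipschitzWith 1 (single (E := E) i) :=
  (lp.isometry_single i).lipschitz.subtype_mk _

theorem hasSum_single_of_mem {z : lp E ∞} (hz : z ∈ c0Sum E) :
    HasSum (fun i => lp.single ∞ i (z i)) z := by
  rw [HasSum, Metric.tendsto_nhds]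
  intro ε hε
  have hsmall : {i | ¬ ‖z i‖ < ε / 2}.Finite :=
    eventually_cofinite.1 (hz.eventually (gt_mem_nhds (half_pos hε)))
  filter_upwards [eventually_ge_atTop hsmall.toFinset] with s hs
  rw [dist_eq_norm]
  refine (lp.norm_le_of_forall_le (half_pos hε).le fun j => ?_).trans_lt (half_lt_self hε)
  rw [lp.coeFn_sub, Pi.sub_apply, lp.coeFn_sum, Finset.sum_apply]
  simp only [lp.single_apply, Finset.sum_pi_single]
  split_ifs with hj
  · simpa using (half_pos hε).le
  · have hj' : ‖z j‖ < ε / 2 := by simpa using fun h => hj (hs (hsmall.mem_toFinset.2 h))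
    simpa using hj'.le

theorem hasSum_single (z : c0Sum E) : HasSum (fun i => single i (eval i z)) z :=
  (Topology.IsInducing.subtypeVal.hasSum_iff (g := (c0Sum E).subtype) _ z).1
    (hasSum_single_of_mem z.2)

end c0Sum

theorem stmt_7_general {X : Type*} [NormedAddCommGroup X] [NormedSpace ℝ X]
    (T : X →L[ℝ] X) (p : ℝ≥0∞) [Fact (1 ≤ p)] (hp : p ≠ ∞) :
    (∀ B : lp (fun _ : ℤ => X) p →L[ℝ] lp (fun _ : ℤ => X) p,
      (∀ (x : lp (fun _ : ℤ => X) p) (n : ℤ),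
        (B x : ℤ → X) n = T ((x : ℤ → X) (n + 1))) →
      (TopologicallyMixing ⇑B ↔ TopologicallyMixing ⇑T))
    ∧ (∀ B : c0Sum (fun _ : ℤ => X) →L[ℝ] c0Sum (fun _ : ℤ => X),
      (∀ (x : c0Sum (fun _ : ℤ => X)) (n : ℤ),
        ((B x : lp (fun _ : ℤ => X) ∞) : ℤ → X) n
          = T (((x : lp (fun _ : ℤ => X) ∞) : ℤ → X) (n + 1))) →
      (TopologicallyMixing ⇑B ↔ TopologicallyMixing ⇑T)) := by
  refine ⟨fun B hB => ?_, fun B hB => ?_⟩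
  · exact topologicallyMixing_iff_of_shift (T := (T : X →+ X)) (B := (B : _ →+ _))
      (π := fun k => (lp.evalₗ (𝕜 := ℝ) _ p k).toAddMonoidHom) (σ := lp.singleAddMonoidHom p)
      (fun k => lp.lipschitzWith_one_eval p k)
      (fun k => (lp.isometry_single (E := fun _ : ℤ => X) (p := p) k).lipschitz)
      (fun _ _ _ => rfl) (fun z z' h => lp.ext (funext h)) (fun k z => hB z k)
      (dense_addSubmonoidClosure_of_hasSum _ fun z => ⟨_, lp.hasSum_single hp z⟩)
  · exact topologicallyMixing_iff_of_shift (Z := c0Sum (fun _ : ℤ => X)) (T := (T : X →+ X))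
      (B := (B : _ →+ _)) (π := c0Sum.eval) (σ := c0Sum.single) c0Sum.lipschitzWith_one_eval
      c0Sum.lipschitzWith_one_single (fun _ _ _ => rfl)
      (fun z z' h => Subtype.ext (lp.ext (funext h))) (fun k z => hB z k)
      (dense_addSubmonoidClosure_of_hasSum _ fun z => ⟨_, c0Sum.hasSum_single z⟩)

/-- the bilateral shift `B_T` on `ℓ^p(X,ℤ)` (or `c₀(X,ℤ)`) is mixing iff
`T` is mixing on `X`. -/
theorem stmt_7 {X : Type*} [NormedAddCommGroup X] [NormedSpace ℝ X] [CompleteSpace X]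
    (T : X →L[ℝ] X) (p : ℝ≥0∞) [Fact (1 ≤ p)] (hp : p ≠ ∞) :
    (∀ B : lp (fun _ : ℤ => X) p →L[ℝ] lp (fun _ : ℤ => X) p,
      (∀ (x : lp (fun _ : ℤ => X) p) (n : ℤ),
        (B x : ℤ → X) n = T ((x : ℤ → X) (n + 1))) →
      (TopologicallyMixing ⇑B ↔ TopologicallyMixing ⇑T))
    ∧ (∀ B : c0Sum (fun _ : ℤ => X) →L[ℝ] c0Sum (fun _ : ℤ => X),
      (∀ (x : c0Sum (fun _ : ℤ => X)) (n : ℤ),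
        ((B x : lp (fun _ : ℤ => X) ∞) : ℤ → X) n
          = T (((x : lp (fun _ : ℤ => X) ∞) : ℤ → X) (n + 1))) →
      (TopologicallyMixing ⇑B ↔ TopologicallyMixing ⇑T)) :=
  stmt_7_general T p hp
end

section
/- Let $T$ be a bounded operator on a Banach space $X$ and suppose there exists an increasing sequence $(n_k)$ of positive integers with $\sup_k \|T^{n_k}\| < \infty$. Then the only periodic point of the shift $B_T$ in $\ell^p(X,\mathbb{N})$ ($1\le p<\infty$) or $c_0(X,\mathbb{N})$ is zero. -/
open Filter Topology ENNReal

private lemma aux_iter_coord {X : Type*} [NormedAddCommGroup X] [NormedSpace ℝ X]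
    (T : X →L[ℝ] X) {α : Type*} (c : α → ℕ → X) (B : α → α)
    (h : ∀ x k, c (B x) k = T (c x (k + 1))) :
    ∀ (m : ℕ) (x : α) (k : ℕ), c (B^[m] x) k = (T ^ m) (c x (k + m)) := by
  intro m
  induction m with
  | zero => intro x k; simp
  | succ m ih =>
    intro x k
    rw [Function.iterate_succ_apply', h, ih, pow_succ']
    rw [ContinuousLinearMap.mul_apply]
    have e : k + 1 + m = k + (m + 1) := by omega
    rw [e]

private lemma aux_coords_zero {X : Type*} [NormedAddCommGroup X] [NormedSpace ℝ X]
    (T : X →L[ℝ] X) (ν : ℕ → ℕ) (hν : StrictMono ν) (M : ℝ)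
    (hM : ∀ k, ‖(T ^ ν k : X →L[ℝ] X)‖ ≤ M)
    (f : ℕ → X) (hf0 : Tendsto (fun n => ‖f n‖) atTop (nhds 0))
    (d : ℕ) (hd : 1 ≤ d) (hper : ∀ m k : ℕ, f k = (T ^ (m * d)) (f (k + m * d))) :
    ∀ k, f k = 0 := by
  have hM0 : 0 ≤ M := le_trans (norm_nonneg _) (hM 0)
  intro k
  have hbound : ∀ j : ℕ, ‖f k‖ ≤ M ^ d * ‖f (k + ν j * d)‖ := by
    intro j
    have h1 : ‖(T ^ (ν j * d) : X →L[ℝ] X)‖ ≤ M ^ d := by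
      rw [pow_mul]
      calc ‖((T ^ ν j) ^ d : X →L[ℝ] X)‖ ≤ ‖(T ^ ν j : X →L[ℝ] X)‖ ^ d :=
            norm_pow_le' _ hd
        _ ≤ M ^ d := pow_le_pow_left₀ (norm_nonneg _) (hM j) d
    calc ‖f k‖ = ‖(T ^ (ν j * d)) (f (k + ν j * d))‖ := by rw [← hper (ν j) k]
      _ ≤ ‖(T ^ (ν j * d) : X →L[ℝ] X)‖ * ‖f (k + ν j * d)‖ :=
          ContinuousLinearMap.le_opNorm _ _
      _ ≤ M ^ d * ‖f (k + ν j * d)‖ :=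
          mul_le_mul_of_nonneg_right h1 (norm_nonneg _)
  have htend : Tendsto (fun j => M ^ d * ‖f (k + ν j * d)‖) atTop (nhds 0) := by
    have hidx : Tendsto (fun j => k + ν j * d) atTop atTop := by
      apply tendsto_atTop_mono (fun j => ?_) hν.tendsto_atTop
      calc ν j ≤ ν j * d := Nat.le_mul_of_pos_right _ hd
        _ ≤ k + ν j * d := Nat.le_add_left _ _
    have := (hf0.comp hidx).const_mul (M ^ d)
    simpa using this
  have hle : ‖f k‖ ≤ 0 := ge_of_tendsto' htend hbound
  simpa using le_antisymm hle (norm_nonneg _)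

private lemma aux_lp_coord_tendsto {X : Type*} [NormedAddCommGroup X]
    (p : ℝ≥0∞) [Fact (1 ≤ p)] (hp : p ≠ ∞) (x : lp (fun _ : ℕ => X) p) :
    Tendsto (fun n => ‖(x : ℕ → X) n‖) atTop (nhds 0) := by
  have hp0 : p ≠ 0 := by
    intro h
    have := (Fact.out : (1 : ℝ≥0∞) ≤ p)
    simp [h] at this
  have hq : 0 < p.toReal := ENNReal.toReal_pos hp0 hp
  have hs : Summable (fun i => ‖(x : ℕ → X) i‖ ^ p.toReal) :=
    (lp.memℓp x).summable hq
  have ht := hs.tendsto_atTop_zero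
  have h2 : Tendsto (fun n => (‖(x : ℕ → X) n‖ ^ p.toReal) ^ (1 / p.toReal))
      atTop (nhds (0 ^ (1 / p.toReal) : ℝ)) :=
    ht.rpow_const (Or.inr (by positivity))
  have h3 : (fun n => (‖(x : ℕ → X) n‖ ^ p.toReal) ^ (1 / p.toReal))
      = fun n => ‖(x : ℕ → X) n‖ := by
    funext n
    rw [← Real.rpow_mul (norm_nonneg _), mul_one_div, div_self hq.ne', Real.rpow_one]
  rw [h3, Real.zero_rpow (by positivity)] at h2
  exact h2

/-- if `sup_k ‖T^{n_k}‖ < ∞` along some increasing sequence `(n_k)` of positive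
integers, then the only periodic point of `B_T` in `ℓ^p(X,ℕ)` or `c₀(X,ℕ)` is zero. -/
theorem stmt_9 {X : Type*} [NormedAddCommGroup X] [NormedSpace ℝ X] [CompleteSpace X]
    (T : X →L[ℝ] X) (ν : ℕ → ℕ) (hν : StrictMono ν) (hν1 : ∀ k, 1 ≤ ν k)
    (M : ℝ) (hM : ∀ k, ‖(T ^ ν k : X →L[ℝ] X)‖ ≤ M)
    (p : ℝ≥0∞) [Fact (1 ≤ p)] (hp : p ≠ ∞) :
    (∀ B : lp (fun _ : ℕ => X) p →L[ℝ] lp (fun _ : ℕ => X) p,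
      (∀ (x : lp (fun _ : ℕ => X) p) (k : ℕ),
        (B x : ℕ → X) k = T ((x : ℕ → X) (k + 1))) →
      ∀ x : lp (fun _ : ℕ => X) p, (∃ d : ℕ, 1 ≤ d ∧ (⇑B)^[d] x = x) → x = 0)
    ∧ (∀ B : c0Sum (fun _ : ℕ => X) →L[ℝ] c0Sum (fun _ : ℕ => X),
      (∀ (x : c0Sum (fun _ : ℕ => X)) (k : ℕ),
        ((B x : lp (fun _ : ℕ => X) ∞) : ℕ → X) k
          = T (((x : lp (fun _ : ℕ => X) ∞) : ℕ → X) (k + 1))) →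
      ∀ x : c0Sum (fun _ : ℕ => X), (∃ d : ℕ, 1 ≤ d ∧ (⇑B)^[d] x = x) → x = 0) := by
  
  have hd_iter : ∀ {α : Type _} (B : α → α) (x : α) (d : ℕ), B^[d] x = x →
      ∀ m : ℕ, B^[m * d] x = x := by
    intro α B x d hx m
    rw [mul_comm, Function.iterate_mul]
    exact Function.iterate_fixed hx m
  constructor
  · intro B hB x hx
    obtain ⟨d, hd, hxd⟩ := hx
    have hcoord := aux_iter_coord T (fun y : lp (fun _ : ℕ => X) p => (y : ℕ → X)) B hB
    have hper : ∀ m k : ℕ, (x : ℕ → X) k = (T ^ (m * d)) ((x : ℕ → X) (k + m * d)) := by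
      intro m k
      have := hcoord (m * d) x k
      rwa [hd_iter (⇑B) x d hxd m] at this
    have hz := aux_coords_zero T ν hν M hM _ (aux_lp_coord_tendsto p hp x) d hd hper
    ext k
    simpa using hz k
  · intro B hB x hx
    obtain ⟨d, hd, hxd⟩ := hx
    have hcoord := aux_iter_coord T
      (fun y : c0Sum (fun _ : ℕ => X) => ((y : lp (fun _ : ℕ => X) ∞) : ℕ → X)) B hB
    have hper : ∀ m k : ℕ, ((x : lp (fun _ : ℕ => X) ∞) : ℕ → X) k
        = (T ^ (m * d)) (((x : lp (fun _ : ℕ => X) ∞) : ℕ → X) (k + m * d)) := by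
      intro m k
      have := hcoord (m * d) x k
      rwa [hd_iter (⇑B) x d hxd m] at this
    have hf0 : Tendsto (fun n => ‖((x : lp (fun _ : ℕ => X) ∞) : ℕ → X) n‖)
        atTop (nhds 0) := by
      have := x.2
      rwa [← Nat.cofinite_eq_atTop]
    have hz := aux_coords_zero T ν hν M hM _ hf0 d hd hper
    apply Subtype.ext
    ext k
    simpa using hz k
end

section
/- Let $T$ be a bounded operator on a Banach space $X$. If $T$ is mixing, then there exist maps $S_n: X \to X$ (not necessarily linear or continuous) such that for every $y\in X$, $S_n y \to 0$ and $T^n S_n y \to y$ as $n\to\infty$. -/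
open Filter Topology ENNReal

/-- if `T` is mixing, then there exist maps `S_n : X → X` (not necessarily
linear or continuous) with `S_n y → 0` and `T^n S_n y → y` for every `y ∈ X`. -/
theorem stmt_17 {X : Type*} [NormedAddCommGroup X] [NormedSpace ℝ X] [CompleteSpace X]
    (T : X →L[ℝ] X) (hT : TopologicallyMixing ⇑T) :
    ∃ S : ℕ → X → X, ∀ y : X,
      Tendsto (fun n : ℕ => S n y) atTop (nhds 0)
      ∧ Tendsto (fun n : ℕ => (⇑T)^[n] (S n y)) atTop (nhds y) := by
  classical
  have key : ∀ (y : X) (m : ℕ), ∃ N : ℕ, ∀ k ≥ N, ∃ u : X,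
      ‖u‖ < 1 / (m + 1) ∧ ‖(⇑T)^[k] u - y‖ < 1 / (m + 1) := by
    intro y m
    have hpos : (0 : ℝ) < 1 / (m + 1) := by positivity
    obtain ⟨N, hN⟩ := hT (Metric.ball 0 (1 / (m + 1))) (Metric.ball y (1 / (m + 1)))
      Metric.isOpen_ball Metric.isOpen_ball
      ⟨0, by simpa using hpos⟩ ⟨y, by simpa using hpos⟩
    refine ⟨N, fun k hk => ?_⟩
    obtain ⟨v, ⟨w, hw, hwv⟩, hv⟩ := hN k hk
    refine ⟨w, by simpa [Metric.mem_ball, dist_zero_right] using hw, ?_⟩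
    rw [hwv]
    simpa [Metric.mem_ball, dist_eq_norm] using hv
  choose N hNspec using key
  have key2 : ∀ (y : X) (m k : ℕ), ∃ u : X, k ≥ N y m →
      ‖u‖ < 1 / (m + 1) ∧ ‖(⇑T)^[k] u - y‖ < 1 / (m + 1) := by
    intro y m k
    by_cases h : k ≥ N y m
    · obtain ⟨u, hu⟩ := hNspec y m k h
      exact ⟨u, fun _ => hu⟩
    · exact ⟨0, fun hk => absurd hk h⟩
  choose u hu using key2
  -- a strictly increasing upper bound for `N y`
  set N' : X → ℕ → ℕ := fun y m => (Finset.range (m + 1)).sup (N y) + m with hN'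
  have hN'ge : ∀ y m, N y m ≤ N' y m := fun y m =>
    le_add_of_le_of_nonneg (Finset.le_sup (Finset.self_mem_range_succ m)) (Nat.zero_le m)
  have hN'mono : ∀ y, StrictMono (N' y) := by
    intro y a b hab
    have h1 : (Finset.range (a + 1)).sup (N y) ≤ (Finset.range (b + 1)).sup (N y) :=
      Finset.sup_mono (Finset.range_subset_range.mpr (by omega))
    simp only [hN']
    omega
  set φ : X → ℕ → ℕ := fun y k => Nat.findGreatest (fun m => N' y m ≤ k) k with hφ
  refine ⟨fun k y => u y (φ y k) k, fun y => ?_⟩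
  have hφP : ∀ k, N' y 0 ≤ k → N' y (φ y k) ≤ k := by
    intro k hk
    exact Nat.findGreatest_spec (P := fun m => N' y m ≤ k) (m := 0) (Nat.zero_le k) hk
  have hφtop : Tendsto (fun k => φ y k) atTop atTop := by
    refine tendsto_atTop.2 fun M => ?_
    filter_upwards [eventually_ge_atTop (max (N' y M) M)] with k hk
    exact Nat.le_findGreatest (le_trans (le_max_right _ _) hk)
      (le_trans (le_max_left _ _) hk)
  have hbound : ∀ᶠ k in atTop, ‖u y (φ y k) k‖ < 1 / (φ y k + 1) ∧
      ‖(⇑T)^[k] (u y (φ y k) k) - y‖ < 1 / (φ y k + 1) := by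
    filter_upwards [eventually_ge_atTop (N' y 0)] with k hk
    exact hu y (φ y k) k (le_trans (hN'ge y (φ y k)) (hφP k hk))
  have hlim : Tendsto (fun k => 1 / ((φ y k : ℝ) + 1)) atTop (nhds 0) :=
    tendsto_one_div_add_atTop_nhds_zero_nat.comp hφtop
  constructor
  · rw [tendsto_zero_iff_norm_tendsto_zero]
    refine squeeze_zero' (Eventually.of_forall fun k => norm_nonneg _) ?_ hlim
    filter_upwards [hbound] with k hk using hk.1.le
  · rw [tendsto_iff_norm_sub_tendsto_zero]
    refine squeeze_zero' (Eventually.of_forall fun k => norm_nonneg _) ?_ hlim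
    filter_upwards [hbound] with k hk using hk.2.le
end

section
/- Let $T$ be a bounded operator on a separable Banach space $X$. If $T$ satisfies the Hypercyclicity Criterion along the full sequence $(n)$ — i.e., there exist dense subsets $X_0, Y_0$ of $X$ and maps $S_n:Y_0\to X$ with $T^nx\to0$ for all $x\in X_0$, $S_ny\to0$ and $T^nS_ny\to y$ for all $y\in Y_0$ — then $T$ satisfies the same criterion with $X_0 = Y_0$ (both equal to $X_0$), after replacing the maps $S_n$. -/
open Filter Topology ENNReal

/-- if `T` satisfies the Hypercyclicity Criterion along the full sequence
`(n)` with dense sets `X₀, Y₀` and maps `S_n`, then it satisfies the same criterion with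
`X₀ = Y₀` (after replacing the maps `S_n`). -/
theorem stmt_18 {X : Type*} [NormedAddCommGroup X] [NormedSpace ℝ X] [CompleteSpace X]
    [TopologicalSpace.SeparableSpace X] (T : X →L[ℝ] X)
    (h : ∃ X₀ Y₀ : Set X, Dense X₀ ∧ Dense Y₀ ∧ ∃ S : ℕ → X → X,
      (∀ x ∈ X₀, Tendsto (fun n : ℕ => (⇑T)^[n] x) atTop (nhds 0))
      ∧ (∀ y ∈ Y₀,
          Tendsto (fun n : ℕ => S n y) atTop (nhds 0)
          ∧ Tendsto (fun n : ℕ => (⇑T)^[n] (S n y)) atTop (nhds y))) :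
    ∃ X₀ : Set X, Dense X₀ ∧ ∃ S : ℕ → X → X,
      (∀ x ∈ X₀, Tendsto (fun n : ℕ => (⇑T)^[n] x) atTop (nhds 0))
      ∧ (∀ y ∈ X₀,
          Tendsto (fun n : ℕ => S n y) atTop (nhds 0)
          ∧ Tendsto (fun n : ℕ => (⇑T)^[n] (S n y)) atTop (nhds y)) := by
  obtain ⟨X₀, Y₀, hX₀, hY₀, S, hS1, hS2⟩ := h
  have key : ∀ y : X, ∃ z : ℕ → X, Tendsto z atTop (nhds 0) ∧
      Tendsto (fun n => (⇑T)^[n] (z n)) atTop (nhds y) := by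
    intro y
    have hy : ∀ k : ℕ, ∃ w ∈ Y₀, dist y w < 1 / (k + 1) := fun k =>
      hY₀.exists_dist_lt y (by positivity)
    choose w hw hwd using hy
    have hN : ∀ k : ℕ, ∃ N : ℕ, ∀ n ≥ N, dist (S n (w k)) 0 < 1 / (k + 1) ∧
        dist ((⇑T)^[n] (S n (w k))) (w k) < 1 / (k + 1) := by
      intro k
      obtain ⟨h1, h2⟩ := hS2 (w k) (hw k)
      obtain ⟨N1, hN1⟩ := (Metric.tendsto_atTop.mp h1) (1 / (k + 1)) (by positivity)
      obtain ⟨N2, hN2⟩ := (Metric.tendsto_atTop.mp h2) (1 / (k + 1)) (by positivity)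
      exact ⟨max N1 N2, fun n hn => ⟨hN1 n (le_trans (le_max_left _ _) hn),
        hN2 n (le_trans (le_max_right _ _) hn)⟩⟩
    choose N hNspec using hN
    set M : ℕ → ℕ := fun k => Nat.rec (N 0) (fun k Mk => max (Mk + 1) (N (k + 1))) k with hM
    have hMmono : StrictMono M := by
      apply strictMono_nat_of_lt_succ
      intro k
      exact lt_of_lt_of_le (Nat.lt_succ_self _) (le_max_left _ _)
    have hMN : ∀ k, N k ≤ M k := by
      intro k
      cases k with
      | zero => exact le_refl _
      | succ k => exact le_max_right _ _
    set κ : ℕ → ℕ := fun n => Nat.findGreatest (fun k => M k ≤ n) n with hκ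
    refine ⟨fun n => S n (w (κ n)), ?_, ?_⟩
    · rw [Metric.tendsto_atTop]
      intro ε hε
      obtain ⟨k, hk⟩ := exists_nat_one_div_lt hε
      refine ⟨M k, fun n hn => ?_⟩
      have hkn : k ≤ n := le_trans hMmono.le_apply hn
      have h1 : k ≤ κ n := Nat.le_findGreatest hkn hn
      have h2 : M (κ n) ≤ n := Nat.findGreatest_spec (P := fun k => M k ≤ n) hkn hn
      have h3 := (hNspec (κ n) n (le_trans (hMN _) h2)).1
      calc dist (S n (w (κ n))) 0 < 1 / (κ n + 1) := h3
        _ ≤ 1 / (k + 1) := by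
            apply one_div_le_one_div_of_le (by positivity)
            exact_mod_cast Nat.succ_le_succ h1
        _ < ε := hk
    · rw [Metric.tendsto_atTop]
      intro ε hε
      obtain ⟨k, hk⟩ := exists_nat_one_div_lt (half_pos hε)
      refine ⟨M k, fun n hn => ?_⟩
      have hkn : k ≤ n := le_trans hMmono.le_apply hn
      have h1 : k ≤ κ n := Nat.le_findGreatest hkn hn
      have h2 : M (κ n) ≤ n := Nat.findGreatest_spec (P := fun k => M k ≤ n) hkn hn
      have h3 := (hNspec (κ n) n (le_trans (hMN _) h2)).2
      have hle : (1 : ℝ) / (κ n + 1) ≤ 1 / (k + 1) := by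
        apply one_div_le_one_div_of_le (by positivity)
        exact_mod_cast Nat.succ_le_succ h1
      calc dist ((⇑T)^[n] (S n (w (κ n)))) y
          ≤ dist ((⇑T)^[n] (S n (w (κ n)))) (w (κ n)) + dist (w (κ n)) y :=
            dist_triangle _ _ _
        _ < 1 / (κ n + 1) + 1 / (κ n + 1) := by
            apply add_lt_add h3
            rw [dist_comm]; exact hwd (κ n)
        _ ≤ 1 / (k + 1) + 1 / (k + 1) := add_le_add hle hle
        _ < ε / 2 + ε / 2 := add_lt_add hk hk
        _ = ε := add_halves ε
  choose Z hZ1 hZ2 using key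
  exact ⟨X₀, hX₀, fun n y => Z y n, hS1, fun y _ => ⟨hZ1 y, hZ2 y⟩⟩
end
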